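/- arXiv:2105.06881 — 4 statements merged into one kernel-verified Lean document; each statement's English description precedes it below -/
import Mathlib

section
/- Let n ≥ 3 and m ≥ 2 be integers. Let U ⊆ ℝ^{n+1} be open, and let Ω : U → ℝ and g, ĝ, q : U → Sym(n+1, ℝ) be of class C², with g and ĝ pointwise invertible coordinate metrics related by g_{αβ} = ĝ_{αβ} + Ω^m q_{αβ}. Assume the g-gradient of Ω is nowhere null on U: N := g^{αβ}∂_αΩ ∂_βΩ ≠ 0; set ε := sign(N) ∈ {±1}, F := |N|^{1/2}, u_α := F⁻¹ ∂_αΩ (so g^{αβ}u_αu_β = ε), h_{αβ} := g_{αβ} − ε u_α u_β, t_{αβ} := q_{μν} h^μ_α h^ν_β, t := g^{αβ} t_{αβ}, t̃_{αβ} := t_{αβ} − (t/n) h_{αβ}, and K_m(Ω) := m(m−1) Ω^{m−2} F², where indices are raised with g. Define E^μ_{ναβ} := C(g)^μ_{ναβ} − C(ĝ)^μ_{ναβ} + K_m(Ω)·((n−2)/(n−1))·( u^μ u_{[α} t̃_{β]ν} + t̃^μ_{[α} u_{β]} u_ν ) − ( ε K_m(Ω)/(n−1) )·( h^μ_{[α}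 t̃_{β]ν} + t̃^μ_{[α} h_{β]ν} ), where C(g) and C(ĝ) are the Weyl tensors of g and ĝ. Then for every x₀ ∈ U with Ω(x₀) = 0 and all indices μ, ν, α, β, one has Ω(x)^{2−m} E^μ_{ναβ}(x) → 0 as x → x₀ within {Ω ≠ 0}. -/
/-!
Write `m = k + 2`. Since `g - ĝ = Ω^m q`, the inverse metrics differ by `Ω^m` times a `C²` matrix
and the Christoffel symbols by `Ω^(m-1) γ` with `γ` explicit and `C¹` on `U`. Differentiating
`Ω^(m-1) γ` once, each curvature quantity of `g` (Riemann, Ricci, scalar, Weyl) equals that of `ĝ`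
plus `Ω^(m-2) m(m-1) F²` times a leading term depending only on `g⁻¹`, `q` and `u = dΩ / F` at the
point, plus `Ω^(m-1)` times a function continuous on `U`. For the Weyl tensor the leading term is
identified by linear algebra at one point: using `g^{ab} u_a u_b = ε` and `ε² = 1` it is exactly
minus the `K_m(Ω)`-terms of `E`. Hence `E = Ω^(m-1) ρ` with `ρ` continuous, and
`Ω^(2-m) E = Ω ρ → 0` at every zero of `Ω`.
-/

open scoped BigOperators Matrix

/-- Partial derivative `∂_α f` of a scalar function on `ℝ^N`. -/
noncomputable def pd {N : ℕ} (α : Fin N) (f : (Fin N → ℝ) → ℝ) (x : Fin N → ℝ) : ℝ :=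
  fderiv ℝ f x (Pi.single α 1)

/-- Christoffel symbols `Γ^μ_{αβ}` of a coordinate metric. -/
noncomputable def chris {N : ℕ} (g : (Fin N → ℝ) → Matrix (Fin N) (Fin N) ℝ)
    (μ α β : Fin N) (x : Fin N → ℝ) : ℝ :=
  (1/2) * ∑ ν, (g x)⁻¹ μ ν *
    (pd α (fun y => g y β ν) x + pd β (fun y => g y α ν) x - pd ν (fun y => g y α β) x)

/-- Riemann tensor `R^μ_{ναβ}` of a coordinate metric. -/
noncomputable def riem {N : ℕ} (g : (Fin N → ℝ) → Matrix (Fin N) (Fin N) ℝ)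
    (μ ν α β : Fin N) (x : Fin N → ℝ) : ℝ :=
  pd α (chris g μ β ν) x - pd β (chris g μ α ν) x
    + ∑ σ, (chris g μ α σ x * chris g σ β ν x - chris g μ β σ x * chris g σ α ν x)

/-- Ricci tensor `R_{νβ}` of a coordinate metric. -/
noncomputable def ricci {N : ℕ} (g : (Fin N → ℝ) → Matrix (Fin N) (Fin N) ℝ)
    (ν β : Fin N) (x : Fin N → ℝ) : ℝ :=
  ∑ μ, riem g μ ν μ β x

/-- Scalar curvature of a coordinate metric. -/
noncomputable def scal {N : ℕ} (g : (Fin N → ℝ) → Matrix (Fin N) (Fin N) ℝ)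
    (x : Fin N → ℝ) : ℝ :=
  ∑ ν, ∑ β, (g x)⁻¹ ν β * ricci g ν β x

/-- Ricci tensor with first index raised, `R^μ_β`. -/
noncomputable def ricUp {N : ℕ} (g : (Fin N → ℝ) → Matrix (Fin N) (Fin N) ℝ)
    (μ β : Fin N) (x : Fin N → ℝ) : ℝ :=
  ∑ σ, (g x)⁻¹ μ σ * ricci g σ β x

/-- Weyl tensor `C^μ_{ναβ}` of a coordinate metric on ℝ^N. -/
noncomputable def weyl {N : ℕ} (g : (Fin N → ℝ) → Matrix (Fin N) (Fin N) ℝ)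
    (μ ν α β : Fin N) (x : Fin N → ℝ) : ℝ :=
  riem g μ ν α β x
    - (2 / ((N : ℝ) - 2)) *
        ((1/2) * ((if μ = α then (1:ℝ) else 0) * ricci g β ν x
            - (if μ = β then (1:ℝ) else 0) * ricci g α ν x)
          - (1/2) * (g x ν α * ricUp g μ β x - g x ν β * ricUp g μ α x))
    + (2 * scal g x / (((N : ℝ) - 1) * ((N : ℝ) - 2))) *
        ((1/2) * ((if μ = α then (1:ℝ) else 0) * g x β ν
            - (if μ = β then (1:ℝ) else 0) * g x α ν))

/-- `N(x) = g^{αβ} ∂_αΩ ∂_βΩ`, the squared norm of the gradient of `Ω`. -/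
noncomputable def gradSq {N : ℕ} (g : (Fin N → ℝ) → Matrix (Fin N) (Fin N) ℝ)
    (Ω : (Fin N → ℝ) → ℝ) (x : Fin N → ℝ) : ℝ :=
  ∑ α, ∑ β, (g x)⁻¹ α β * pd α Ω x * pd β Ω x

/-- `ε = sign(N)`. -/
noncomputable def epsn {N : ℕ} (g : (Fin N → ℝ) → Matrix (Fin N) (Fin N) ℝ)
    (Ω : (Fin N → ℝ) → ℝ) (x : Fin N → ℝ) : ℝ :=
  Real.sign (gradSq g Ω x)

/-- `F = |N|^{1/2}`. -/
noncomputable def Ffun {N : ℕ} (g : (Fin N → ℝ) → Matrix (Fin N) (Fin N) ℝ)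
    (Ω : (Fin N → ℝ) → ℝ) (x : Fin N → ℝ) : ℝ :=
  Real.sqrt |gradSq g Ω x|

/-- `u_α = F⁻¹ ∂_αΩ`. -/
noncomputable def uLow {N : ℕ} (g : (Fin N → ℝ) → Matrix (Fin N) (Fin N) ℝ)
    (Ω : (Fin N → ℝ) → ℝ) (α : Fin N) (x : Fin N → ℝ) : ℝ :=
  (Ffun g Ω x)⁻¹ * pd α Ω x

/-- `u^μ = g^{μσ} u_σ`. -/
noncomputable def uUp {N : ℕ} (g : (Fin N → ℝ) → Matrix (Fin N) (Fin N) ℝ)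
    (Ω : (Fin N → ℝ) → ℝ) (μ : Fin N) (x : Fin N → ℝ) : ℝ :=
  ∑ σ, (g x)⁻¹ μ σ * uLow g Ω σ x

/-- the projector `h_{αβ} = g_{αβ} - ε u_α u_β`. -/
noncomputable def hLow {N : ℕ} (g : (Fin N → ℝ) → Matrix (Fin N) (Fin N) ℝ)
    (Ω : (Fin N → ℝ) → ℝ) (α β : Fin N) (x : Fin N → ℝ) : ℝ :=
  g x α β - epsn g Ω x * uLow g Ω α x * uLow g Ω β x

/-- `h^μ_α = g^{μσ} h_{σα}`. -/
noncomputable def hMix {N : ℕ} (g : (Fin N → ℝ) → Matrix (Fin N) (Fin N) ℝ)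
    (Ω : (Fin N → ℝ) → ℝ) (μ α : Fin N) (x : Fin N → ℝ) : ℝ :=
  ∑ σ, (g x)⁻¹ μ σ * hLow g Ω σ α x

/-- `t_{αβ} = q_{μν} h^μ_α h^ν_β`. -/
noncomputable def tLow {N : ℕ} (g q : (Fin N → ℝ) → Matrix (Fin N) (Fin N) ℝ)
    (Ω : (Fin N → ℝ) → ℝ) (α β : Fin N) (x : Fin N → ℝ) : ℝ :=
  ∑ μ, ∑ ν, q x μ ν * hMix g Ω μ α x * hMix g Ω ν β x

/-- `t = g^{αβ} t_{αβ}`. -/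
noncomputable def tTr {N : ℕ} (g q : (Fin N → ℝ) → Matrix (Fin N) (Fin N) ℝ)
    (Ω : (Fin N → ℝ) → ℝ) (x : Fin N → ℝ) : ℝ :=
  ∑ α, ∑ β, (g x)⁻¹ α β * tLow g q Ω α β x

/-- the trace-free part `t̃_{αβ} = t_{αβ} - (t/n) h_{αβ}`, `n` the boundary dimension. -/
noncomputable def ttLow {N : ℕ} (n : ℕ) (g q : (Fin N → ℝ) → Matrix (Fin N) (Fin N) ℝ)
    (Ω : (Fin N → ℝ) → ℝ) (α β : Fin N) (x : Fin N → ℝ) : ℝ :=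
  tLow g q Ω α β x - (tTr g q Ω x / (n : ℝ)) * hLow g Ω α β x

/-- `t̃^μ_α = g^{μσ} t̃_{σα}`. -/
noncomputable def ttUp {N : ℕ} (n : ℕ) (g q : (Fin N → ℝ) → Matrix (Fin N) (Fin N) ℝ)
    (Ω : (Fin N → ℝ) → ℝ) (μ α : Fin N) (x : Fin N → ℝ) : ℝ :=
  ∑ σ, (g x)⁻¹ μ σ * ttLow n g q Ω σ α x

/-- `K_m(Ω) = m(m-1) Ω^{m-2} F²`. -/
noncomputable def Kfun {N : ℕ} (m : ℕ) (g : (Fin N → ℝ) → Matrix (Fin N) (Fin N) ℝ)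
    (Ω : (Fin N → ℝ) → ℝ) (x : Fin N → ℝ) : ℝ :=
  (m : ℝ) * ((m : ℝ) - 1) * (Ω x)^(m - 2) * (Ffun g Ω x)^2

/-- The tensor `E^μ_{ναβ}` of Statement 1: the difference of the Weyl tensors of `g` and
`ĝ` corrected by the explicit `K_m(Ω)`-terms of Lemma 2.4 of the paper. -/
noncomputable def Etensor {N : ℕ} (n m : ℕ)
    (g gh q : (Fin N → ℝ) → Matrix (Fin N) (Fin N) ℝ)
    (Ω : (Fin N → ℝ) → ℝ) (μ ν α β : Fin N) (x : Fin N → ℝ) : ℝ :=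
  weyl g μ ν α β x - weyl gh μ ν α β x
    + Kfun m g Ω x * (((n : ℝ) - 2)/((n : ℝ) - 1)) *
        (uUp g Ω μ x * ((1/2) * (uLow g Ω α x * ttLow n g q Ω β ν x
              - uLow g Ω β x * ttLow n g q Ω α ν x))
          + ((1/2) * (ttUp n g q Ω μ α x * uLow g Ω β x
              - ttUp n g q Ω μ β x * uLow g Ω α x)) * uLow g Ω ν x)
    - (epsn g Ω x * Kfun m g Ω x / ((n : ℝ) - 1)) *
        ((1/2) * (hMix g Ω μ α x * ttLow n g q Ω β ν x
              - hMix g Ω μ β x * ttLow n g q Ω α ν x)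
          + (1/2) * (ttUp n g q Ω μ α x * hLow g Ω β ν x
              - ttUp n g q Ω μ β x * hLow g Ω α ν x))

open Finset

section PartialDerivative

variable {N : ℕ} {f h : (Fin N → ℝ) → ℝ} {x : Fin N → ℝ} {α : Fin N}

lemma pd_congr_of_eqOn {U : Set (Fin N → ℝ)} (hU : IsOpen U) (hx : x ∈ U) (hfh : Set.EqOn f h U) :
    pd α f x = pd α h x := by
  rw [pd, pd, (Filter.eventuallyEq_of_mem (hU.mem_nhds hx) hfh).fderiv_eq]

lemma pd_add (hf : DifferentiableAt ℝ f x) (hh : DifferentiableAt ℝ h x) :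
    pd α (fun y => f y + h y) x = pd α f x + pd α h x := by
  simp [pd, fderiv_fun_add hf hh]

lemma pd_mul (hf : DifferentiableAt ℝ f x) (hh : DifferentiableAt ℝ h x) :
    pd α (fun y => f y * h y) x = pd α f x * h x + f x * pd α h x := by
  simp [pd, fderiv_fun_mul hf hh]
  ring

lemma pd_add_pow_succ_mul {φ : (Fin N → ℝ) → ℝ} (hf : DifferentiableAt ℝ f x)
    (hφ : DifferentiableAt ℝ φ x) (hh : DifferentiableAt ℝ h x) (j : ℕ) :
    pd α (fun y => f y + φ y ^ (j + 1) * h y) x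
      = pd α f x + φ x ^ j * ((j + 1) * pd α φ x * h x) + φ x ^ (j + 1) * pd α h x := by
  rw [pd_add (h := fun y => φ y ^ (j + 1) * h y) hf ((hφ.pow _).mul hh),
    pd_mul (f := fun y => φ y ^ (j + 1)) (hφ.pow _) hh]
  simp [pd, fderiv_fun_pow _ hφ]
  ring

lemma contDiffOn_pd {U : Set (Fin N → ℝ)} {m n : WithTop ℕ∞} (hf : ContDiffOn ℝ n f U)
    (hU : IsOpen U) (hmn : m + 1 ≤ n) (α : Fin N) : ContDiffOn ℝ m (pd α f) U :=
  (hf.fderiv_of_isOpen hU hmn).clm_apply contDiffOn_const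

lemma continuousOn_pd {U : Set (Fin N → ℝ)} (hf : ContDiffOn ℝ 1 f U) (hU : IsOpen U)
    (α : Fin N) : ContinuousOn (pd α f) U :=
  (contDiffOn_pd hf hU (zero_add 1).le α).continuousOn

end PartialDerivative

section MatrixInverse

variable {E ι : Type*} [NormedAddCommGroup E] [NormedSpace ℝ E] [Fintype ι] [DecidableEq ι]
  {U : Set E} {A : E → Matrix ι ι ℝ} {n : WithTop ℕ∞}

lemma contDiffOn_det (hA : ∀ a b, ContDiffOn ℝ n (fun x => A x a b) U) :
    ContDiffOn ℝ n (fun x => (A x).det) U := by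
  simp only [Matrix.det_apply']
  exact ContDiffOn.sum fun σ _ => contDiffOn_const.mul (contDiffOn_prod fun i _ => hA (σ i) i)

lemma contDiffOn_adjugate_apply (hA : ∀ a b, ContDiffOn ℝ n (fun x => A x a b) U) (μ ν : ι) :
    ContDiffOn ℝ n (fun x => (A x).adjugate μ ν) U := by
  simp only [Matrix.adjugate_apply]
  refine contDiffOn_det fun a b => ?_
  by_cases h : a = ν <;> simp [Matrix.updateRow_apply, h, contDiffOn_const, hA a b]

lemma contDiffOn_inv_apply (hA : ∀ a b, ContDiffOn ℝ n (fun x => A x a b) U)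
    (hinv : ∀ x ∈ U, IsUnit (A x)) (μ ν : ι) :
    ContDiffOn ℝ n (fun x => (A x)⁻¹ μ ν) U := by
  have hdet : ∀ x ∈ U, (A x).det ≠ 0 := fun x hx =>
    ((Matrix.isUnit_iff_isUnit_det _).mp (hinv x hx)).ne_zero
  simp only [Matrix.inv_def, Matrix.smul_apply, Ring.inverse_eq_inv', smul_eq_mul]
  exact ((contDiffOn_det hA).inv hdet).mul (contDiffOn_adjugate_apply hA μ ν)

end MatrixInverse

-- The error terms `O(Ω^j)`, with a quotient that is continuous on `U`.
def PowDvdOn {X : Type*} [TopologicalSpace X] (Ω : X → ℝ) (j : ℕ) (U : Set X) (f : X → ℝ) :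
    Prop :=
  ∃ ρ : X → ℝ, ContinuousOn ρ U ∧ ∀ x ∈ U, f x = Ω x ^ j * ρ x

namespace PowDvdOn

variable {X : Type*} [TopologicalSpace X] {Ω f f' c : X → ℝ} {i j : ℕ} {U : Set X}

lemma of_continuousOn {ρ : X → ℝ} (hρ : ContinuousOn ρ U) :
    PowDvdOn Ω j U (fun x => Ω x ^ j * ρ x) :=
  ⟨ρ, hρ, fun _ _ => rfl⟩

lemma pow : PowDvdOn Ω j U (fun x => Ω x ^ j) :=
  ⟨1, continuousOn_const, fun _ _ => (mul_one _).symm⟩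

lemma congr (hf : PowDvdOn Ω j U f) (hff' : ∀ x ∈ U, f x = f' x) : PowDvdOn Ω j U f' := by
  obtain ⟨ρ, hρ, hf⟩ := hf
  exact ⟨ρ, hρ, fun x hx => (hff' x hx) ▸ hf x hx⟩

lemma add (hf : PowDvdOn Ω j U f) (hf' : PowDvdOn Ω j U f') :
    PowDvdOn Ω j U (fun x => f x + f' x) := by
  obtain ⟨ρ, hρ, hf⟩ := hf
  obtain ⟨ρ', hρ', hf'⟩ := hf'
  exact ⟨_, hρ.add hρ', fun x hx => by simp only [hf x hx, hf' x hx, Pi.add_apply, mul_add]⟩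

lemma sub (hf : PowDvdOn Ω j U f) (hf' : PowDvdOn Ω j U f') :
    PowDvdOn Ω j U (fun x => f x - f' x) := by
  obtain ⟨ρ, hρ, hf⟩ := hf
  obtain ⟨ρ', hρ', hf'⟩ := hf'
  exact ⟨_, hρ.sub hρ', fun x hx => by simp only [hf x hx, hf' x hx, Pi.sub_apply, mul_sub]⟩

lemma sum {ι : Type*} (s : Finset ι) {F : ι → X → ℝ} (hF : ∀ i ∈ s, PowDvdOn Ω j U (F i)) :
    PowDvdOn Ω j U (fun x => ∑ i ∈ s, F i x) := by
  choose ρ hρ hF using hF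
  refine ⟨fun x => ∑ i : s, ρ i i.2 x, continuousOn_finsetSum _ fun i _ => hρ i i.2,
    fun x hx => ?_⟩
  dsimp only
  rw [mul_sum, ← sum_coe_sort s]
  exact sum_congr rfl fun i _ => hF i i.2 x hx

lemma mul_left (hc : ContinuousOn c U) (hf : PowDvdOn Ω j U f) :
    PowDvdOn Ω j U (fun x => c x * f x) := by
  obtain ⟨ρ, hρ, hf⟩ := hf
  exact ⟨_, hc.mul hρ, fun x hx => by simp only [hf x hx, Pi.mul_apply]; ring⟩

lemma const_mul (a : ℝ) (hf : PowDvdOn Ω j U f) : PowDvdOn Ω j U (fun x => a * f x) :=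
  hf.mul_left continuousOn_const

lemma mul (hf : PowDvdOn Ω i U f) (hf' : PowDvdOn Ω j U f') :
    PowDvdOn Ω (i + j) U (fun x => f x * f' x) := by
  obtain ⟨ρ, hρ, hf⟩ := hf
  obtain ⟨ρ', hρ', hf'⟩ := hf'
  exact ⟨_, hρ.mul hρ', fun x hx => by simp only [hf x hx, hf' x hx, Pi.mul_apply, pow_add]; ring⟩

lemma of_le (hΩ : ContinuousOn Ω U) (hij : i ≤ j) (hf : PowDvdOn Ω j U f) : PowDvdOn Ω i U f := by
  obtain ⟨ρ, hρ, hf⟩ := hf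
  refine ⟨fun x => Ω x ^ (j - i) * ρ x, (hΩ.pow _).mul hρ, fun x hx => ?_⟩
  rw [hf x hx, ← mul_assoc, ← pow_add, Nat.add_sub_cancel' hij]

lemma tendsto_zpow_mul (hf : PowDvdOn Ω j U f) (hΩ : ContinuousOn Ω U) {x₀ : X} (hx₀ : x₀ ∈ U)
    (hΩx₀ : Ω x₀ = 0) {e : ℤ} (he : 0 < e + j) :
    Filter.Tendsto (fun x => Ω x ^ e * f x) (nhdsWithin x₀ {x | x ∈ U ∧ Ω x ≠ 0}) (nhds 0) := by
  obtain ⟨ρ, hρ, hf⟩ := hf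
  obtain ⟨l, hl⟩ : ∃ l : ℕ, e + j = l + 1 := ⟨(e + j - 1).toNat, by omega⟩
  have hlim : Filter.Tendsto (fun x => Ω x ^ (l + 1) * ρ x) (nhdsWithin x₀ U)
      (nhds (Ω x₀ ^ (l + 1) * ρ x₀)) := ((hΩ x₀ hx₀).pow (l + 1)).mul (hρ x₀ hx₀)
  rw [hΩx₀, zero_pow l.succ_ne_zero, zero_mul] at hlim
  refine (hlim.mono_left (nhdsWithin_mono _ fun x hx => hx.1)).congr' ?_
  filter_upwards [self_mem_nhdsWithin] with x ⟨hxU, hxΩ⟩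
  rw [hf x hxU, ← mul_assoc, ← zpow_natCast (Ω x) j, ← zpow_add₀ hxΩ, hl]
  norm_cast

end PowDvdOn

noncomputable section

-- Linear algebra at one point: `gi`, `G`, `Q`, `u`, `ε` stand for `g⁻¹`, `g`, `q`, `u_α`, `ε`, and
-- `uUp`, ..., `ttUp` below are the functions of the same names evaluated at that point.
namespace AtPoint

variable {d : ℕ}

def uUp (gi : Matrix (Fin d) (Fin d) ℝ) (u : Fin d → ℝ) (μ : Fin d) : ℝ := ∑ σ, gi μ σ * u σ

def hLow (G : Matrix (Fin d) (Fin d) ℝ) (u : Fin d → ℝ) (ε : ℝ) (a b : Fin d) : ℝ :=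
  G a b - ε * u a * u b

def hMix (gi G : Matrix (Fin d) (Fin d) ℝ) (u : Fin d → ℝ) (ε : ℝ) (μ a : Fin d) : ℝ :=
  ∑ σ, gi μ σ * hLow G u ε σ a

def tLow (gi G Q : Matrix (Fin d) (Fin d) ℝ) (u : Fin d → ℝ) (ε : ℝ) (a b : Fin d) : ℝ :=
  ∑ μ, ∑ ν, Q μ ν * hMix gi G u ε μ a * hMix gi G u ε ν b

def tTr (gi G Q : Matrix (Fin d) (Fin d) ℝ) (u : Fin d → ℝ) (ε : ℝ) : ℝ :=
  ∑ a, ∑ b, gi a b * tLow gi G Q u ε a b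

def ttLow (n : ℕ) (gi G Q : Matrix (Fin d) (Fin d) ℝ) (u : Fin d → ℝ) (ε : ℝ) (a b : Fin d) : ℝ :=
  tLow gi G Q u ε a b - (tTr gi G Q u ε / (n : ℝ)) * hLow G u ε a b

def ttUp (n : ℕ) (gi G Q : Matrix (Fin d) (Fin d) ℝ) (u : Fin d → ℝ) (ε : ℝ) (μ a : Fin d) : ℝ :=
  ∑ σ, gi μ σ * ttLow n gi G Q u ε σ a

-- `q^μ_b`, `v_b = u^μ q_{μb}`, `v^μ`, `q(u, u)` and `g^{ab} q_{ab}`.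
def qMix (gi Q : Matrix (Fin d) (Fin d) ℝ) (μ b : Fin d) : ℝ := ∑ σ, gi μ σ * Q σ b

def quLow (gi Q : Matrix (Fin d) (Fin d) ℝ) (u : Fin d → ℝ) (b : Fin d) : ℝ :=
  ∑ μ, uUp gi u μ * Q μ b

def quUp (gi Q : Matrix (Fin d) (Fin d) ℝ) (u : Fin d → ℝ) (μ : Fin d) : ℝ :=
  ∑ σ, gi μ σ * quLow gi Q u σ

def quu (gi Q : Matrix (Fin d) (Fin d) ℝ) (u : Fin d → ℝ) : ℝ :=
  ∑ b, quLow gi Q u b * uUp gi u b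

def qTr (gi Q : Matrix (Fin d) (Fin d) ℝ) : ℝ := ∑ a, ∑ b, gi a b * Q a b

-- As `dΩ = F u`, the leading part of `∂_c (Γ(g) - Γ(ĝ))^μ_{ab}` is `K_m(Ω)` times this.
def chrisLead (gi Q : Matrix (Fin d) (Fin d) ℝ) (u : Fin d → ℝ) (c μ a b : Fin d) : ℝ :=
  (1/2 : ℝ) * u c * ∑ σ, gi μ σ * (u a * Q b σ + u b * Q a σ - u σ * Q a b)

def riemLead (gi Q : Matrix (Fin d) (Fin d) ℝ) (u : Fin d → ℝ) (μ ν a b : Fin d) : ℝ :=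
  chrisLead gi Q u a μ b ν - chrisLead gi Q u b μ a ν

def ricciLead (gi Q : Matrix (Fin d) (Fin d) ℝ) (u : Fin d → ℝ) (ν b : Fin d) : ℝ :=
  ∑ μ, riemLead gi Q u μ ν μ b

def scalLead (gi Q : Matrix (Fin d) (Fin d) ℝ) (u : Fin d → ℝ) : ℝ :=
  ∑ ν, ∑ b, gi ν b * ricciLead gi Q u ν b

def ricUpLead (gi Q : Matrix (Fin d) (Fin d) ℝ) (u : Fin d → ℝ) (μ b : Fin d) : ℝ :=
  ∑ σ, gi μ σ * ricciLead gi Q u σ b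

def weylLead (gi G Q : Matrix (Fin d) (Fin d) ℝ) (u : Fin d → ℝ) (μ ν a b : Fin d) : ℝ :=
  riemLead gi Q u μ ν a b
    - (2 / ((d : ℝ) - 2)) *
        ((1/2) * ((if μ = a then (1:ℝ) else 0) * ricciLead gi Q u b ν
            - (if μ = b then (1:ℝ) else 0) * ricciLead gi Q u a ν)
          - (1/2) * (G ν a * ricUpLead gi Q u μ b - G ν b * ricUpLead gi Q u μ a))
    + (2 * scalLead gi Q u / (((d : ℝ) - 1) * ((d : ℝ) - 2))) *
        ((1/2) * ((if μ = a then (1:ℝ) else 0) * G b ν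
            - (if μ = b then (1:ℝ) else 0) * G a ν))

section Contractions

variable {gi G Q : Matrix (Fin d) (Fin d) ℝ} {u : Fin d → ℝ} {ε : ℝ}

lemma sum_mul_sum_eq_sum_uUp_mul (hgi : gi.IsSymm) (p r : Fin d → ℝ) :
    ∑ i, p i * ∑ j, gi i j * r j = ∑ j, uUp gi p j * r j := by
  simp only [uUp, mul_sum, sum_mul]
  rw [sum_comm]
  exact sum_congr rfl fun j _ => sum_congr rfl fun i _ => by rw [hgi.apply j i]; ring

lemma sum_mul_qMix (hgi : gi.IsSymm) (b : Fin d) : ∑ i, u i * qMix gi Q i b = quLow gi Q u b :=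
  sum_mul_sum_eq_sum_uUp_mul hgi u fun σ => Q σ b

lemma sum_mul_quUp (hgi : gi.IsSymm) : ∑ i, u i * quUp gi Q u i = quu gi Q u := by
  simp only [quUp]
  rw [sum_mul_sum_eq_sum_uUp_mul hgi, quu]
  exact sum_congr rfl fun i _ => mul_comm _ _

lemma sum_qMix_diag (hQ : Q.IsSymm) : ∑ i, qMix gi Q i i = qTr gi Q := by
  simp only [qMix, qTr, hQ.apply]

lemma chrisLead_eq (hQ : Q.IsSymm) (c μ a b : Fin d) :
    chrisLead gi Q u c μ a b
      = 1/2 * u c * (u a * qMix gi Q μ b + u b * qMix gi Q μ a - uUp gi u μ * Q a b) := by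
  have h : ∑ σ, gi μ σ * (u a * Q b σ + u b * Q a σ - u σ * Q a b)
      = u a * qMix gi Q μ b + u b * qMix gi Q μ a - uUp gi u μ * Q a b := by
    simp only [qMix, uUp, mul_sum, sum_mul, ← sum_add_distrib, ← sum_sub_distrib]
    exact sum_congr rfl fun σ _ => by rw [hQ.apply σ b, hQ.apply σ a]; ring
  rw [chrisLead, h]

lemma riemLead_eq (hQ : Q.IsSymm) (μ ν a b : Fin d) :
    riemLead gi Q u μ ν a b
      = 1/2 * (u a * u ν * qMix gi Q μ b - u a * uUp gi u μ * Q b ν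
          - u b * u ν * qMix gi Q μ a + u b * uUp gi u μ * Q a ν) := by
  rw [riemLead, chrisLead_eq hQ, chrisLead_eq hQ, hQ.apply ν b, hQ.apply ν a]; ring

lemma ricciLead_eq (hgi : gi.IsSymm) (hQ : Q.IsSymm) (hu : ∑ μ, uUp gi u μ * u μ = ε)
    (ν b : Fin d) :
    ricciLead gi Q u ν b
      = 1/2 * (u ν * quLow gi Q u b - ε * Q ν b - u b * u ν * qTr gi Q
          + u b * quLow gi Q u ν) := by
  calc ricciLead gi Q u ν b
      = ∑ μ, (u ν / 2 * (u μ * qMix gi Q μ b) - Q b ν / 2 * (uUp gi u μ * u μ)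
          - u b * u ν / 2 * qMix gi Q μ μ + u b / 2 * (uUp gi u μ * Q μ ν)) :=
        sum_congr rfl fun μ _ => by rw [riemLead_eq hQ]; ring
    _ = _ := by
        simp only [sum_add_distrib, sum_sub_distrib, ← mul_sum]
        rw [sum_mul_qMix hgi, hu, sum_qMix_diag hQ, hQ.apply ν b]
        simp only [quLow]
        ring

lemma scalLead_eq (hgi : gi.IsSymm) (hQ : Q.IsSymm) (hu : ∑ μ, uUp gi u μ * u μ = ε) :
    scalLead gi Q u = quu gi Q u - ε * qTr gi Q := by
  have inner : ∀ ν, ∑ b, gi ν b * ricciLead gi Q u ν b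
      = 1 / 2 * (u ν * quUp gi Q u ν) - ε / 2 * ∑ b, gi ν b * Q ν b
        - qTr gi Q / 2 * (uUp gi u ν * u ν) + 1 / 2 * (quLow gi Q u ν * uUp gi u ν) := by
    intro ν
    simp only [ricciLead_eq hgi hQ hu, quUp, uUp, mul_sum, sum_mul, ← sum_sub_distrib,
      ← sum_add_distrib]
    exact sum_congr rfl fun b _ => by ring
  simp only [scalLead, inner, sum_add_distrib, sum_sub_distrib, ← mul_sum]
  rw [sum_mul_quUp hgi, hu]
  simp only [quu, qTr]
  ring

lemma ricUpLead_eq (hgi : gi.IsSymm) (hQ : Q.IsSymm) (hu : ∑ μ, uUp gi u μ * u μ = ε)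
    (μ b : Fin d) :
    ricUpLead gi Q u μ b
      = 1/2 * (uUp gi u μ * quLow gi Q u b - ε * qMix gi Q μ b
          - u b * qTr gi Q * uUp gi u μ + u b * quUp gi Q u μ) := by
  simp only [ricUpLead, ricciLead_eq hgi hQ hu, uUp, qMix, quUp, mul_sum, sum_mul,
    ← sum_sub_distrib, ← sum_add_distrib]
  exact sum_congr rfl fun σ _ => by ring

lemma hMix_eq (hinv : gi * G = 1) (μ a : Fin d) :
    hMix gi G u ε μ a = (if μ = a then 1 else 0) - ε * uUp gi u μ * u a := by
  have h : ∑ σ, gi μ σ * G σ a = (1 : Matrix (Fin d) (Fin d) ℝ) μ a := by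
    rw [← hinv, Matrix.mul_apply]
  simp only [hMix, hLow, mul_sub, sum_sub_distrib, h, Matrix.one_apply, uUp, mul_sum, sum_mul]
  congr 1
  exact sum_congr rfl fun σ _ => by ring

lemma tLow_eq (hQ : Q.IsSymm) (hinv : gi * G = 1) (hε : ε * ε = 1) (a b : Fin d) :
    tLow gi G Q u ε a b
      = Q a b - ε * u b * quLow gi Q u a - ε * u a * quLow gi Q u b
        + u a * u b * quu gi Q u := by
  have hQh : ∀ μ, ∑ ν, Q μ ν * hMix gi G u ε ν b = Q μ b - ε * u b * quLow gi Q u μ := by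
    intro μ
    simp only [hMix_eq hinv, mul_sub, mul_ite, mul_one, mul_zero, sum_sub_distrib, sum_ite_eq',
      mem_univ, if_true, quLow, mul_sum]
    congr 1
    exact sum_congr rfl fun ν _ => by rw [hQ.apply μ ν]; ring
  calc tLow gi G Q u ε a b
      = ∑ μ, hMix gi G u ε μ a * ∑ ν, Q μ ν * hMix gi G u ε ν b := by
        simp only [tLow, mul_sum]
        exact sum_congr rfl fun μ _ => sum_congr rfl fun ν _ => by ring
    _ = ∑ μ, ((if μ = a then Q μ b - ε * u b * quLow gi Q u μ else 0)
          - ε * u a * (uUp gi u μ * Q μ b)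
          + ε * ε * (u a * u b) * (quLow gi Q u μ * uUp gi u μ)) :=
        sum_congr rfl fun μ _ => by rw [hQh, hMix_eq hinv]; split_ifs <;> ring
    _ = _ := by
        simp only [sum_add_distrib, sum_sub_distrib, ← mul_sum, sum_ite_eq', mem_univ, if_true,
          hε]
        simp only [quu, quLow]
        ring

lemma tTr_eq (hgi : gi.IsSymm) (hQ : Q.IsSymm) (hinv : gi * G = 1)
    (hu : ∑ μ, uUp gi u μ * u μ = ε) (hε : ε * ε = 1) :
    tTr gi G Q u ε = qTr gi Q - ε * quu gi Q u := by
  have inner : ∀ a, ∑ b, gi a b * tLow gi G Q u ε a b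
      = ∑ b, gi a b * Q a b - ε * (quLow gi Q u a * uUp gi u a) - ε * (u a * quUp gi Q u a)
        + quu gi Q u * (uUp gi u a * u a) := by
    intro a
    simp only [tLow_eq hQ hinv hε, uUp, quUp, mul_sum, sum_mul, ← sum_sub_distrib,
      ← sum_add_distrib]
    exact sum_congr rfl fun b _ => by ring
  simp only [tTr, inner, sum_add_distrib, sum_sub_distrib, ← mul_sum]
  rw [sum_mul_quUp hgi, hu]
  simp only [quu, qTr]
  ring

lemma ttUp_eq (hQ : Q.IsSymm) (hinv : gi * G = 1) (hε : ε * ε = 1) (n : ℕ) (μ a : Fin d) :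
    ttUp n gi G Q u ε μ a
      = qMix gi Q μ a - ε * u a * quUp gi Q u μ - ε * quLow gi Q u a * uUp gi u μ
        + quu gi Q u * u a * uUp gi u μ - tTr gi G Q u ε / n * hMix gi G u ε μ a := by
  simp only [ttUp, ttLow, tLow_eq hQ hinv hε, qMix, quUp, uUp, hMix, mul_sum, ← sum_sub_distrib,
    ← sum_add_distrib]
  exact sum_congr rfl fun σ _ => by ring

end Contractions

theorem weylLead_add_correction_eq_zero {n : ℕ} (hn : 2 ≤ n)
    {gi G Q : Matrix (Fin (n+1)) (Fin (n+1)) ℝ} {u : Fin (n+1) → ℝ} {ε : ℝ}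
    (hG : G.IsSymm) (hQ : Q.IsSymm) (hinv : gi * G = 1) (hu : ∑ μ, uUp gi u μ * u μ = ε)
    (hε : ε * ε = 1) (μ ν a b : Fin (n+1)) :
    weylLead gi G Q u μ ν a b
      + ((n - 2) / (n - 1)) *
          (uUp gi u μ * ((1/2) * (u a * ttLow n gi G Q u ε b ν - u b * ttLow n gi G Q u ε a ν))
            + ((1/2) * (ttUp n gi G Q u ε μ a * u b - ttUp n gi G Q u ε μ b * u a)) * u ν)
      - (ε / (n - 1)) *
          ((1/2) * (hMix gi G u ε μ a * ttLow n gi G Q u ε b ν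
              - hMix gi G u ε μ b * ttLow n gi G Q u ε a ν)
            + (1/2) * (ttUp n gi G Q u ε μ a * hLow G u ε b ν
              - ttUp n gi G Q u ε μ b * hLow G u ε a ν)) = 0 := by
  have hgi : gi.IsSymm := by rw [← Matrix.inv_eq_left_inv hinv]; exact hG.inv
  have hn0 : (n : ℝ) ≠ 0 := by positivity
  have hn1 : (n : ℝ) - 1 ≠ 0 := by
    have : (2 : ℝ) ≤ n := by exact_mod_cast hn
    linarith
  have hd2 : ((n + 1 : ℕ) : ℝ) - 2 = n - 1 := by push_cast; ring
  have hd1 : ((n + 1 : ℕ) : ℝ) - 1 = n := by push_cast; ring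
  rw [weylLead, hd2, hd1, riemLead_eq hQ, ricciLead_eq hgi hQ hu, ricciLead_eq hgi hQ hu,
    scalLead_eq hgi hQ hu, ricUpLead_eq hgi hQ hu, ricUpLead_eq hgi hQ hu,
    ttUp_eq hQ hinv hε, ttUp_eq hQ hinv hε, hMix_eq hinv, hMix_eq hinv, ttLow, ttLow,
    tLow_eq hQ hinv hε, tLow_eq hQ hinv hε, tTr_eq hgi hQ hinv hu hε]
  simp only [hLow, hG.apply a ν, hG.apply b ν]
  rcases mul_self_eq_one_iff.mp hε with rfl | rfl <;>
  · field_simp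
    ring

end AtPoint

end

noncomputable section Curvature

variable {N : ℕ} {U : Set (Fin N → ℝ)} {g : (Fin N → ℝ) → Matrix (Fin N) (Fin N) ℝ}

/-- `2 Γ_{ναβ}`: twice the Christoffel symbol of the first kind. -/
def dMetric (g : (Fin N → ℝ) → Matrix (Fin N) (Fin N) ℝ) (ν a b : Fin N) (x : Fin N → ℝ) : ℝ :=
  pd a (fun y => g y b ν) x + pd b (fun y => g y a ν) x - pd ν (fun y => g y a b) x

lemma chris_eq_dMetric (μ a b : Fin N) (x : Fin N → ℝ) :
    chris g μ a b x = (1/2) * ∑ ν, (g x)⁻¹ μ ν * dMetric g ν a b x :=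
  rfl

variable (hU : IsOpen U) (hg : ∀ a b, ContDiffOn ℝ 2 (fun x => g x a b) U)
include hU hg

lemma contDiffOn_dMetric (ν a b : Fin N) : ContDiffOn ℝ 1 (dMetric g ν a b) U :=
  ((contDiffOn_pd (hg b ν) hU le_rfl a).add (contDiffOn_pd (hg a ν) hU le_rfl b)).sub
    (contDiffOn_pd (hg a b) hU le_rfl ν)

variable (hginv : ∀ x ∈ U, IsUnit (g x))
include hginv

lemma contDiffOn_chris (μ a b : Fin N) : ContDiffOn ℝ 1 (chris g μ a b) U :=
  contDiffOn_const.mul (ContDiffOn.sum fun ν _ =>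
    ((contDiffOn_inv_apply hg hginv μ ν).of_le one_le_two).mul (contDiffOn_dMetric hU hg ν a b))

lemma continuousOn_riem (μ ν a b : Fin N) : ContinuousOn (riem g μ ν a b) U := by
  have hΓ := contDiffOn_chris hU hg hginv
  refine (((continuousOn_pd (hΓ μ b ν) hU a).sub (continuousOn_pd (hΓ μ a ν) hU b)).add
    (continuousOn_finsetSum _ fun σ _ => ?_))
  exact ((hΓ μ a σ).continuousOn.mul (hΓ σ b ν).continuousOn).sub
    ((hΓ μ b σ).continuousOn.mul (hΓ σ a ν).continuousOn)

lemma continuousOn_ricci (ν b : Fin N) : ContinuousOn (ricci g ν b) U :=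
  continuousOn_finsetSum _ fun μ _ => continuousOn_riem hU hg hginv μ ν μ b

lemma continuousOn_ricUp (μ b : Fin N) : ContinuousOn (ricUp g μ b) U :=
  continuousOn_finsetSum _ fun σ _ =>
    (contDiffOn_inv_apply hg hginv μ σ).continuousOn.mul (continuousOn_ricci hU hg hginv σ b)

lemma continuousOn_scal : ContinuousOn (scal g) U :=
  continuousOn_finsetSum _ fun ν _ => continuousOn_finsetSum _ fun b _ =>
    (contDiffOn_inv_apply hg hginv ν b).continuousOn.mul (continuousOn_ricci hU hg hginv ν b)

end Curvature

section UnitNormal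

variable {N : ℕ} {Ω : (Fin N → ℝ) → ℝ} {g : (Fin N → ℝ) → Matrix (Fin N) (Fin N) ℝ}
  {x : Fin N → ℝ}

lemma Ffun_ne_zero (h : gradSq g Ω x ≠ 0) : Ffun g Ω x ≠ 0 :=
  (Real.sqrt_pos.mpr (abs_pos.mpr h)).ne'

lemma epsn_mul_self (h : gradSq g Ω x ≠ 0) : epsn g Ω x * epsn g Ω x = 1 := by
  rcases Real.sign_apply_eq_of_ne_zero _ h with h | h <;> simp [epsn, h]

lemma sum_uUp_mul_uLow (h : gradSq g Ω x ≠ 0) :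
    ∑ μ, uUp g Ω μ x * uLow g Ω μ x = epsn g Ω x := by
  have hF := Ffun_ne_zero h
  have hsum : ∑ μ, uUp g Ω μ x * uLow g Ω μ x = gradSq g Ω x / Ffun g Ω x ^ 2 := by
    simp only [uUp, uLow, gradSq, sum_mul, sum_div]
    exact sum_congr rfl fun μ _ => sum_congr rfl fun σ _ => by field_simp
  rw [hsum, Ffun, Real.sq_sqrt (abs_nonneg _), epsn]
  rcases lt_or_gt_of_ne h with h | h
  · rw [abs_of_neg h, Real.sign_of_neg h]; field_simp
  · rw [abs_of_pos h, Real.sign_of_pos h]; field_simp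

lemma uUp_eq_atPoint (μ : Fin N) : uUp g Ω μ x = AtPoint.uUp (g x)⁻¹ (uLow g Ω · x) μ := rfl

lemma hLow_eq_atPoint (a b : Fin N) :
    hLow g Ω a b x = AtPoint.hLow (g x) (uLow g Ω · x) (epsn g Ω x) a b := rfl

lemma hMix_eq_atPoint (μ a : Fin N) :
    hMix g Ω μ a x = AtPoint.hMix (g x)⁻¹ (g x) (uLow g Ω · x) (epsn g Ω x) μ a := rfl

lemma ttLow_eq_atPoint (n : ℕ) (q : (Fin N → ℝ) → Matrix (Fin N) (Fin N) ℝ) (a b : Fin N) :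
    ttLow n g q Ω a b x
      = AtPoint.ttLow n (g x)⁻¹ (g x) (q x) (uLow g Ω · x) (epsn g Ω x) a b := rfl

lemma ttUp_eq_atPoint (n : ℕ) (q : (Fin N → ℝ) → Matrix (Fin N) (Fin N) ℝ) (μ a : Fin N) :
    ttUp n g q Ω μ a x
      = AtPoint.ttUp n (g x)⁻¹ (g x) (q x) (uLow g Ω · x) (epsn g Ω x) μ a := rfl

end UnitNormal

noncomputable section Perturbation

variable {N : ℕ} {U : Set (Fin N → ℝ)} {Ω : (Fin N → ℝ) → ℝ}
  {g gh q : (Fin N → ℝ) → Matrix (Fin N) (Fin N) ℝ} {k : ℕ}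

structure IsPerturbation (U : Set (Fin N → ℝ)) (Ω : (Fin N → ℝ) → ℝ) (m : ℕ)
    (g gh q : (Fin N → ℝ) → Matrix (Fin N) (Fin N) ℝ) : Prop where
  isOpen : IsOpen U
  contDiffOn_Ω : ContDiffOn ℝ 2 Ω U
  contDiffOn_g : ∀ a b, ContDiffOn ℝ 2 (fun x => g x a b) U
  contDiffOn_gh : ∀ a b, ContDiffOn ℝ 2 (fun x => gh x a b) U
  contDiffOn_q : ∀ a b, ContDiffOn ℝ 2 (fun x => q x a b) U
  isUnit_g : ∀ x ∈ U, IsUnit (g x)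
  isUnit_gh : ∀ x ∈ U, IsUnit (gh x)
  eq_add : ∀ x ∈ U, g x = gh x + Ω x ^ m • q x

-- With `m = k + 2`: explicit formulas for the differences of `∂g`, `2Γ_{ν..}`, `g⁻¹` and `Γ`
-- divided by `Ω^(m-1)`, `Ω^(m-1)`, `Ω^m` and `Ω^(m-1)`; they stay `C¹` across `{Ω = 0}`.
def pdQuot (q : (Fin N → ℝ) → Matrix (Fin N) (Fin N) ℝ) (Ω : (Fin N → ℝ) → ℝ) (k : ℕ)
    (c a b : Fin N) (x : Fin N → ℝ) : ℝ :=
  ((k : ℝ) + 2) * pd c Ω x * q x a b + Ω x * pd c (fun y => q y a b) x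

def dMetricQuot (q : (Fin N → ℝ) → Matrix (Fin N) (Fin N) ℝ) (Ω : (Fin N → ℝ) → ℝ) (k : ℕ)
    (ν a b : Fin N) (x : Fin N → ℝ) : ℝ :=
  pdQuot q Ω k a b ν x + pdQuot q Ω k b a ν x - pdQuot q Ω k ν a b x

def invQuot (g gh q : (Fin N → ℝ) → Matrix (Fin N) (Fin N) ℝ) (μ ν : Fin N)
    (x : Fin N → ℝ) : ℝ :=
  -((g x)⁻¹ * q x * (gh x)⁻¹) μ ν

def chrisQuot (g gh q : (Fin N → ℝ) → Matrix (Fin N) (Fin N) ℝ) (Ω : (Fin N → ℝ) → ℝ) (k : ℕ)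
    (μ a b : Fin N) (x : Fin N → ℝ) : ℝ :=
  (1/2) * ∑ ν, (Ω x * invQuot g gh q μ ν x * dMetric gh ν a b x
    + (g x)⁻¹ μ ν * dMetricQuot q Ω k ν a b x)

def Kcoeff (k : ℕ) (g : (Fin N → ℝ) → Matrix (Fin N) (Fin N) ℝ) (Ω : (Fin N → ℝ) → ℝ)
    (x : Fin N → ℝ) : ℝ :=
  ((k : ℝ) + 1) * ((k : ℝ) + 2) * Ffun g Ω x ^ 2

namespace IsPerturbation

lemma apply_eq (hP : IsPerturbation U Ω m g gh q) {x : Fin N → ℝ} (hx : x ∈ U) (a b : Fin N) :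
    g x a b = gh x a b + Ω x ^ m * q x a b := by
  simp [hP.eq_add x hx]

lemma differentiableAt {f : (Fin N → ℝ) → ℝ} (hP : IsPerturbation U Ω m g gh q)
    (hf : ContDiffOn ℝ 1 f U) {x : Fin N → ℝ} (hx : x ∈ U) : DifferentiableAt ℝ f x :=
  (hf.contDiffAt (hP.isOpen.mem_nhds hx)).differentiableAt one_ne_zero

variable (hP : IsPerturbation U Ω (k + 2) g gh q)
include hP

lemma pd_apply_eq {x : Fin N → ℝ} (hx : x ∈ U) (c a b : Fin N) :
    pd c (fun y => g y a b) x
      = pd c (fun y => gh y a b) x + Ω x ^ (k + 1) * pdQuot q Ω k c a b x := by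
  rw [pd_congr_of_eqOn hP.isOpen hx fun y hy => hP.apply_eq hy a b,
    pd_add_pow_succ_mul (hP.differentiableAt ((hP.contDiffOn_gh a b).of_le one_le_two) hx)
      (hP.differentiableAt (hP.contDiffOn_Ω.of_le one_le_two) hx)
      (hP.differentiableAt ((hP.contDiffOn_q a b).of_le one_le_two) hx), pdQuot]
  push_cast
  ring

lemma dMetric_eq {x : Fin N → ℝ} (hx : x ∈ U) (ν a b : Fin N) :
    dMetric g ν a b x = dMetric gh ν a b x + Ω x ^ (k + 1) * dMetricQuot q Ω k ν a b x := by
  simp only [dMetric, dMetricQuot, hP.pd_apply_eq hx]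
  ring

lemma inv_apply_eq {x : Fin N → ℝ} (hx : x ∈ U) (μ ν : Fin N) :
    (g x)⁻¹ μ ν = (gh x)⁻¹ μ ν + Ω x ^ (k + 2) * invQuot g gh q μ ν x := by
  have h := Matrix.inv_sub_inv (iff_of_true (hP.isUnit_g x hx) (hP.isUnit_gh x hx))
  have hsub : gh x - g x = -(Ω x ^ (k + 2) • q x) := by rw [hP.eq_add x hx]; abel
  rw [hsub, Matrix.mul_neg, Matrix.neg_mul, Matrix.mul_smul, Matrix.smul_mul] at h
  have h' := congrFun (congrFun h μ) ν
  simp only [Matrix.sub_apply, Matrix.neg_apply, Matrix.smul_apply, smul_eq_mul] at h'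
  rw [invQuot]
  linear_combination h'

lemma chris_apply_eq {x : Fin N → ℝ} (hx : x ∈ U) (μ a b : Fin N) :
    chris g μ a b x = chris gh μ a b x + Ω x ^ (k + 1) * chrisQuot g gh q Ω k μ a b x := by
  simp only [chris_eq_dMetric, chrisQuot, hP.inv_apply_eq hx μ, hP.dMetric_eq hx, mul_sum,
    ← sum_add_distrib]
  exact sum_congr rfl fun ν _ => by ring

lemma contDiffOn_invQuot (μ ν : Fin N) : ContDiffOn ℝ 2 (invQuot g gh q μ ν) U := by
  unfold invQuot
  simp only [Matrix.mul_apply]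
  exact (ContDiffOn.sum fun j _ => (ContDiffOn.sum fun i _ =>
    (contDiffOn_inv_apply hP.contDiffOn_g hP.isUnit_g μ i).mul (hP.contDiffOn_q i j)).mul
      (contDiffOn_inv_apply hP.contDiffOn_gh hP.isUnit_gh j ν)).neg

lemma contDiffOn_pdQuot (c a b : Fin N) : ContDiffOn ℝ 1 (pdQuot q Ω k c a b) U :=
  (contDiffOn_const.mul (contDiffOn_pd hP.contDiffOn_Ω hP.isOpen le_rfl c)).mul
      ((hP.contDiffOn_q a b).of_le one_le_two) |>.add
    ((hP.contDiffOn_Ω.of_le one_le_two).mul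
      (contDiffOn_pd (hP.contDiffOn_q a b) hP.isOpen le_rfl c))

lemma contDiffOn_chrisQuot (μ a b : Fin N) : ContDiffOn ℝ 1 (chrisQuot g gh q Ω k μ a b) U := by
  refine contDiffOn_const.mul (ContDiffOn.sum fun ν _ => ContDiffOn.add ?_ ?_)
  · exact ((hP.contDiffOn_Ω.mul (hP.contDiffOn_invQuot μ ν)).of_le one_le_two).mul
      (contDiffOn_dMetric hP.isOpen hP.contDiffOn_gh ν a b)
  · exact ((contDiffOn_inv_apply hP.contDiffOn_g hP.isUnit_g μ ν).of_le one_le_two).mul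
      (((hP.contDiffOn_pdQuot a b ν).add (hP.contDiffOn_pdQuot b a ν)).sub
        (hP.contDiffOn_pdQuot ν a b))

lemma pd_chris_eq {x : Fin N → ℝ} (hx : x ∈ U) (c μ a b : Fin N) :
    pd c (chris g μ a b) x = pd c (chris gh μ a b) x
      + Ω x ^ k * (((k : ℝ) + 1) * pd c Ω x * chrisQuot g gh q Ω k μ a b x)
      + Ω x ^ (k + 1) * pd c (chrisQuot g gh q Ω k μ a b) x := by
  rw [pd_congr_of_eqOn hP.isOpen hx fun y hy => hP.chris_apply_eq hy μ a b,
    pd_add_pow_succ_mul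
      (hP.differentiableAt (contDiffOn_chris hP.isOpen hP.contDiffOn_gh hP.isUnit_gh μ a b) hx)
      (hP.differentiableAt (hP.contDiffOn_Ω.of_le one_le_two) hx)
      (hP.differentiableAt (hP.contDiffOn_chrisQuot μ a b) hx)]

lemma powDvdOn_chrisQuot_sub_lead (hnull : ∀ x ∈ U, gradSq g Ω x ≠ 0) (c μ a b : Fin N) :
    PowDvdOn Ω 1 U (fun x => ((k : ℝ) + 1) * pd c Ω x * chrisQuot g gh q Ω k μ a b x
      - Kcoeff k g Ω x * AtPoint.chrisLead (g x)⁻¹ (q x) (uLow g Ω · x) c μ a b) := by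
  refine ⟨fun x => ((k : ℝ) + 1) * pd c Ω x * ((1/2) * ∑ ν, (invQuot g gh q μ ν x
      * dMetric gh ν a b x + (g x)⁻¹ μ ν * dMetric q ν a b x)), ?_, fun x hx => ?_⟩
  · refine (continuousOn_const.mul (continuousOn_pd (hP.contDiffOn_Ω.of_le one_le_two)
      hP.isOpen c)).mul (continuousOn_const.mul (continuousOn_finsetSum _ fun ν _ => ?_))
    exact ((hP.contDiffOn_invQuot μ ν).continuousOn.mul
        (contDiffOn_dMetric hP.isOpen hP.contDiffOn_gh ν a b).continuousOn).add
      ((contDiffOn_inv_apply hP.contDiffOn_g hP.isUnit_g μ ν).continuousOn.mul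
        (contDiffOn_dMetric hP.isOpen hP.contDiffOn_q ν a b).continuousOn)
  · have hF := Ffun_ne_zero (hnull x hx)
    simp only [chrisQuot, dMetricQuot, pdQuot, AtPoint.chrisLead, Kcoeff, uLow, dMetric, mul_sum,
      ← sum_sub_distrib, pow_one]
    refine sum_congr rfl fun ν _ => ?_
    field_simp
    ring

lemma powDvdOn_chris_sub (μ a b : Fin N) :
    PowDvdOn Ω (k + 1) U (fun x => chris g μ a b x - chris gh μ a b x) :=
  ⟨_, (hP.contDiffOn_chrisQuot μ a b).continuousOn, fun x hx => by
    dsimp only; rw [hP.chris_apply_eq hx]; ring⟩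

lemma powDvdOn_riem_sub_lead (hnull : ∀ x ∈ U, gradSq g Ω x ≠ 0) (μ ν a b : Fin N) :
    PowDvdOn Ω (k + 1) U (fun x => riem g μ ν a b x - riem gh μ ν a b x
      - Ω x ^ k * (Kcoeff k g Ω x * AtPoint.riemLead (g x)⁻¹ (q x) (uLow g Ω · x) μ ν a b)) := by
  have hD := hP.powDvdOn_chrisQuot_sub_lead hnull
  have hΔ := hP.powDvdOn_chris_sub
  have hΓ := fun μ a b =>
    (contDiffOn_chris hP.isOpen hP.contDiffOn_g hP.isUnit_g μ a b).continuousOn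
  have hΓh := fun μ a b =>
    (contDiffOn_chris hP.isOpen hP.contDiffOn_gh hP.isUnit_gh μ a b).continuousOn
  have hdγ := fun c μ a b => continuousOn_pd (hP.contDiffOn_chrisQuot μ a b) hP.isOpen c
  refine ((((PowDvdOn.pow.mul (hD a μ b ν)).sub (PowDvdOn.pow.mul (hD b μ a ν))).add
    (PowDvdOn.of_continuousOn ((hdγ a μ b ν).sub (hdγ b μ a ν)))).add
    (PowDvdOn.sum univ fun σ _ =>
      (((hΔ σ b ν).mul_left (hΓ μ a σ)).add ((hΔ μ a σ).mul_left (hΓh σ b ν))).sub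
        (((hΔ σ a ν).mul_left (hΓ μ b σ)).add ((hΔ μ b σ).mul_left (hΓh σ a ν))))).congr
    fun x hx => ?_
  have hquad : ∑ σ, (chris g μ a σ x * chris g σ b ν x - chris g μ b σ x * chris g σ a ν x)
      - ∑ σ, (chris gh μ a σ x * chris gh σ b ν x - chris gh μ b σ x * chris gh σ a ν x)
      = ∑ σ, (chris g μ a σ x * (chris g σ b ν x - chris gh σ b ν x)
          + chris gh σ b ν x * (chris g μ a σ x - chris gh μ a σ x)
          - (chris g μ b σ x * (chris g σ a ν x - chris gh σ a ν x)
          + chris gh σ a ν x * (chris g μ b σ x - chris gh μ b σ x))) := by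
    rw [← sum_sub_distrib]
    exact sum_congr rfl fun σ _ => by ring
  simp only [riem, AtPoint.riemLead, Pi.sub_apply]
  rw [hP.pd_chris_eq hx a μ b ν, hP.pd_chris_eq hx b μ a ν]
  linear_combination -hquad

lemma powDvdOn_ricci_sub_lead (hnull : ∀ x ∈ U, gradSq g Ω x ≠ 0) (ν b : Fin N) :
    PowDvdOn Ω (k + 1) U (fun x => ricci g ν b x - ricci gh ν b x
      - Ω x ^ k * (Kcoeff k g Ω x * AtPoint.ricciLead (g x)⁻¹ (q x) (uLow g Ω · x) ν b)) :=
  (PowDvdOn.sum univ fun μ _ => hP.powDvdOn_riem_sub_lead hnull μ ν μ b).congr fun x _ => by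
    simp only [ricci, AtPoint.ricciLead, mul_sum, sum_sub_distrib]

lemma powDvdOn_inv_sub (μ ν : Fin N) :
    PowDvdOn Ω (k + 2) U (fun x => (g x)⁻¹ μ ν - (gh x)⁻¹ μ ν) :=
  ⟨_, (hP.contDiffOn_invQuot μ ν).continuousOn, fun x hx => by
    dsimp only; rw [hP.inv_apply_eq hx]; ring⟩

lemma powDvdOn_apply_sub (a b : Fin N) : PowDvdOn Ω (k + 2) U (fun x => g x a b - gh x a b) :=
  ⟨_, (hP.contDiffOn_q a b).continuousOn, fun x hx => by
    dsimp only; rw [hP.apply_eq hx]; ring⟩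

lemma powDvdOn_scal_sub_lead (hnull : ∀ x ∈ U, gradSq g Ω x ≠ 0) :
    PowDvdOn Ω (k + 1) U (fun x => scal g x - scal gh x
      - Ω x ^ k * (Kcoeff k g Ω x * AtPoint.scalLead (g x)⁻¹ (q x) (uLow g Ω · x))) := by
  refine (PowDvdOn.sum univ fun ν _ => PowDvdOn.sum univ fun b _ =>
    ((hP.powDvdOn_ricci_sub_lead hnull ν b).mul_left
      (contDiffOn_inv_apply hP.contDiffOn_g hP.isUnit_g ν b).continuousOn).add
    (((hP.powDvdOn_inv_sub ν b).of_le hP.contDiffOn_Ω.continuousOn k.succ.le_succ).mul_left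
      (continuousOn_ricci hP.isOpen hP.contDiffOn_gh hP.isUnit_gh ν b))).congr fun x _ => ?_
  simp only [scal, AtPoint.scalLead, mul_sum, ← sum_sub_distrib]
  exact sum_congr rfl fun ν _ => sum_congr rfl fun b _ => by ring

lemma powDvdOn_ricUp_sub_lead (hnull : ∀ x ∈ U, gradSq g Ω x ≠ 0) (μ b : Fin N) :
    PowDvdOn Ω (k + 1) U (fun x => ricUp g μ b x - ricUp gh μ b x
      - Ω x ^ k * (Kcoeff k g Ω x * AtPoint.ricUpLead (g x)⁻¹ (q x) (uLow g Ω · x) μ b)) := by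
  refine (PowDvdOn.sum univ fun σ _ =>
    ((hP.powDvdOn_ricci_sub_lead hnull σ b).mul_left
      (contDiffOn_inv_apply hP.contDiffOn_g hP.isUnit_g μ σ).continuousOn).add
    (((hP.powDvdOn_inv_sub μ σ).of_le hP.contDiffOn_Ω.continuousOn k.succ.le_succ).mul_left
      (continuousOn_ricci hP.isOpen hP.contDiffOn_gh hP.isUnit_gh σ b))).congr fun x _ => ?_
  simp only [ricUp, AtPoint.ricUpLead, mul_sum, ← sum_sub_distrib]
  exact sum_congr rfl fun σ _ => by ring

lemma powDvdOn_weyl_sub_lead (hnull : ∀ x ∈ U, gradSq g Ω x ≠ 0) (μ ν a b : Fin N) :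
    PowDvdOn Ω (k + 1) U (fun x => weyl g μ ν a b x - weyl gh μ ν a b x
      - Ω x ^ k * (Kcoeff k g Ω x
          * AtPoint.weylLead (g x)⁻¹ (g x) (q x) (uLow g Ω · x) μ ν a b)) := by
  have hRic := hP.powDvdOn_ricci_sub_lead hnull
  have hUp := hP.powDvdOn_ricUp_sub_lead hnull
  have hG := fun a b =>
    (hP.powDvdOn_apply_sub a b).of_le hP.contDiffOn_Ω.continuousOn k.succ.le_succ
  have hg := fun a b => (hP.contDiffOn_g a b).continuousOn
  have hS := hP.powDvdOn_scal_sub_lead hnull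
  have hUph := continuousOn_ricUp hP.isOpen hP.contDiffOn_gh hP.isUnit_gh
  set δa : ℝ := if μ = a then 1 else 0
  set δb : ℝ := if μ = b then 1 else 0
  refine (((hP.powDvdOn_riem_sub_lead hnull μ ν a b).sub (PowDvdOn.const_mul (2 / ((N : ℝ) - 2))
    ((PowDvdOn.const_mul (1/2) (((hRic b ν).const_mul δa).sub ((hRic a ν).const_mul δb))).sub
      (PowDvdOn.const_mul (1/2) (((((hUp μ b).mul_left (hg ν a)).add
        ((hG ν a).mul_left (hUph μ b))).sub ((hUp μ a).mul_left (hg ν b))).sub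
        ((hG ν b).mul_left (hUph μ a))))))).add
    (PowDvdOn.const_mul (2 / (((N : ℝ) - 1) * ((N : ℝ) - 2)))
      ((PowDvdOn.const_mul (1/2) (((hS.mul_left (hg b ν)).const_mul δa).sub
          ((hS.mul_left (hg a ν)).const_mul δb))).add
        ((PowDvdOn.const_mul (1/2) (((hG b ν).const_mul δa).sub ((hG a ν).const_mul δb))).mul_left
          (continuousOn_scal hP.isOpen hP.contDiffOn_gh hP.isUnit_gh))))).congr fun x _ => ?_
  simp only [weyl, AtPoint.weylLead]
  ring

end IsPerturbation

end Perturbation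

lemma Etensor_eq_weyl_sub_lead {n k : ℕ} (hn : 2 ≤ n) {Ω : (Fin (n+1) → ℝ) → ℝ}
    {g gh q : (Fin (n+1) → ℝ) → Matrix (Fin (n+1)) (Fin (n+1)) ℝ} {x : Fin (n+1) → ℝ}
    (hg : (g x).IsSymm) (hq : (q x).IsSymm) (hginv : IsUnit (g x)) (hnull : gradSq g Ω x ≠ 0)
    (μ ν a b : Fin (n+1)) :
    Etensor n (k + 2) g gh q Ω μ ν a b x = weyl g μ ν a b x - weyl gh μ ν a b x
      - Ω x ^ k * (Kcoeff k g Ω x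
          * AtPoint.weylLead (g x)⁻¹ (g x) (q x) (uLow g Ω · x) μ ν a b) := by
  have hkey := AtPoint.weylLead_add_correction_eq_zero hn hg hq
    (Matrix.nonsing_inv_mul _ ((Matrix.isUnit_iff_isUnit_det _).mp hginv))
    (sum_uUp_mul_uLow hnull) (epsn_mul_self hnull) μ ν a b
  have hK : Kfun (k + 2) g Ω x = Ω x ^ k * Kcoeff k g Ω x := by
    simp only [Kfun, Kcoeff, Nat.add_sub_cancel]
    push_cast
    ring
  rw [Etensor, hK]
  simp only [uUp_eq_atPoint, hLow_eq_atPoint, hMix_eq_atPoint, ttLow_eq_atPoint, ttUp_eq_atPoint]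
  linear_combination (Ω x ^ k * Kcoeff k g Ω x) * hkey

theorem statement1_general
    (n m : ℕ) (hn : 3 ≤ n) (hm : 2 ≤ m)
    (U : Set (Fin (n+1) → ℝ)) (hU : IsOpen U)
    (Ω : (Fin (n+1) → ℝ) → ℝ) (hΩ : ContDiffOn ℝ 2 Ω U)
    (g gh q : (Fin (n+1) → ℝ) → Matrix (Fin (n+1)) (Fin (n+1)) ℝ)
    (hgC : ∀ α β : Fin (n+1), ContDiffOn ℝ 2 (fun x => g x α β) U)
    (hghC : ∀ α β : Fin (n+1), ContDiffOn ℝ 2 (fun x => gh x α β) U)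
    (hqC : ∀ α β : Fin (n+1), ContDiffOn ℝ 2 (fun x => q x α β) U)
    (hgs : ∀ x ∈ U, (g x)ᵀ = g x)
    (hqs : ∀ x ∈ U, (q x)ᵀ = q x)
    (hginv : ∀ x ∈ U, IsUnit (g x))
    (hghinv : ∀ x ∈ U, IsUnit (gh x))
    (hrel : ∀ x ∈ U, g x = gh x + (Ω x)^m • q x)
    (hnonnull : ∀ x ∈ U, gradSq g Ω x ≠ 0) :
    ∀ x₀ ∈ U, Ω x₀ = 0 → ∀ μ ν α β : Fin (n+1),
      Filter.Tendsto (fun x => (Ω x) ^ ((2 : ℤ) - (m : ℤ)) * Etensor n m g gh q Ω μ ν α β x)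
        (nhdsWithin x₀ {x | x ∈ U ∧ Ω x ≠ 0}) (nhds 0) := by
  obtain ⟨k, rfl⟩ : ∃ k, m = k + 2 := ⟨m - 2, by omega⟩
  have hP : IsPerturbation U Ω (k + 2) g gh q := ⟨hU, hΩ, hgC, hghC, hqC, hginv, hghinv, hrel⟩
  intro x₀ hx₀ hΩx₀ μ ν α β
  have hE : PowDvdOn Ω (k + 1) U (Etensor n (k + 2) g gh q Ω μ ν α β) :=
    (hP.powDvdOn_weyl_sub_lead hnonnull μ ν α β).congr fun x hx =>
      (Etensor_eq_weyl_sub_lead (by omega) (hgs x hx) (hqs x hx) (hginv x hx) (hnonnull x hx)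
        μ ν α β).symm
  exact hE.tendsto_zpow_mul hΩ.continuousOn hx₀ hΩx₀ (by push_cast; omega)

/-- Lemma 2.4 of the paper. If `g = ĝ + Ω^m q` with `∇Ω` nowhere null,
then `C(g) - C(ĝ)` agrees with the explicit `K_m(Ω)`-terms up to `o(Ω^{m-2})`, i.e.
`Ω^{2-m} E → 0` at every point of `{Ω = 0}` within `{Ω ≠ 0}`. -/
theorem statement1
    (n m : ℕ) (hn : 3 ≤ n) (hm : 2 ≤ m)
    (U : Set (Fin (n+1) → ℝ)) (hU : IsOpen U)
    (Ω : (Fin (n+1) → ℝ) → ℝ) (hΩ : ContDiffOn ℝ 2 Ω U)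
    (g gh q : (Fin (n+1) → ℝ) → Matrix (Fin (n+1)) (Fin (n+1)) ℝ)
    (hgC : ∀ α β : Fin (n+1), ContDiffOn ℝ 2 (fun x => g x α β) U)
    (hghC : ∀ α β : Fin (n+1), ContDiffOn ℝ 2 (fun x => gh x α β) U)
    (hqC : ∀ α β : Fin (n+1), ContDiffOn ℝ 2 (fun x => q x α β) U)
    (hgs : ∀ x ∈ U, (g x)ᵀ = g x)
    (hghs : ∀ x ∈ U, (gh x)ᵀ = gh x)
    (hqs : ∀ x ∈ U, (q x)ᵀ = q x)
    (hginv : ∀ x ∈ U, IsUnit (g x))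
    (hghinv : ∀ x ∈ U, IsUnit (gh x))
    (hrel : ∀ x ∈ U, g x = gh x + (Ω x)^m • q x)
    (hnonnull : ∀ x ∈ U, gradSq g Ω x ≠ 0) :
    ∀ x₀ ∈ U, Ω x₀ = 0 → ∀ μ ν α β : Fin (n+1),
      Filter.Tendsto (fun x => (Ω x) ^ ((2 : ℤ) - (m : ℤ)) * Etensor n m g gh q Ω μ ν α β x)
        (nhdsWithin x₀ {x | x ∈ U ∧ Ω x ≠ 0}) (nhds 0) :=
  statement1_general n m hn hm U hU Ω hΩ g gh q hgC hghC hqC hgs hqs hginv hghinv hrel hnonnull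
end

section
/- Let n ≥ 3 be an integer, let γ and P be symmetric n×n real matrices with γ invertible, let ε > 0, and let q : [0, ε) → Sym(n, ℝ) be a C² family of symmetric matrices. Define g(Ω) := γ + Ω² P + (Ω⁴/4) P γ⁻¹ P + Ωⁿ q(Ω) and assume g(Ω) is invertible for every Ω ∈ [0, ε). Then, with dots denoting d/dΩ, lim_{Ω→0⁺} Ω^{2−n} ( (1/2) ġ(Ω) g(Ω)⁻¹ ġ(Ω) + Ω⁻¹ ġ(Ω) − g̈(Ω) ) = −n(n−2) q(0). -/
open scoped BigOperators Matrix

attribute [local instance] Matrix.normedAddCommGroup Matrix.normedSpace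

/-!
Write `g = g₀ + Ωⁿ q` with `g₀ = γ + Ω²P + (Ω⁴/4)A`, `A = Pγ⁻¹P`. The flat part is a perfect square,
`g₀ = N γ⁻¹ N` with `N = γ + (Ω²/2)P`, and `ġ₀ = 2Ω X` with `X = P + (Ω²/2)A = Pγ⁻¹N = Nγ⁻¹P`,
so `X g₀⁻¹ X = A` exactly. This makes the contribution of `g₀` to
`(1/2)ġ g⁻¹ ġ + Ω⁻¹ġ − g̈` cancel identically (the flat part has vanishing Weyl tensor), and the
resolvent identity `g⁻¹ − g₀⁻¹ = −Ωⁿ g⁻¹ q g₀⁻¹` shows that replacing `g₀⁻¹` by `g⁻¹` costs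
only `O(Ωⁿ)`. After multiplication by `Ω^{2−n}` what remains is `n(2−n) q` plus terms carrying a
positive power of `Ω`, all continuous at `Ω = 0⁺`.
-/

open Filter Topology Set

namespace Matrix

variable {ι R : Type*} [Fintype ι] [DecidableEq ι] [CommRing R]

theorem mul_mul_inv_mul_mul_cancel {N γ : Matrix ι ι R} (hN : IsUnit N) (hγ : IsUnit γ)
    (B D : Matrix ι ι R) : B * N * (N * γ⁻¹ * N)⁻¹ * (N * D) = B * γ * D := by
  have hN' := (isUnit_iff_isUnit_det N).1 hN
  rw [mul_inv_rev, mul_inv_rev, nonsing_inv_nonsing_inv _ ((isUnit_iff_isUnit_det γ).1 hγ)]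
  simp only [Matrix.mul_assoc, mul_nonsing_inv_cancel_left _ _ hN',
    nonsing_inv_mul_cancel_left _ _ hN']

theorem mul_inv_add_mul {G E : Matrix ι ι R} (hG : IsUnit G) (hGE : IsUnit (G + E))
    (X Y : Matrix ι ι R) :
    X * (G + E)⁻¹ * Y = X * G⁻¹ * Y - X * (G + E)⁻¹ * E * G⁻¹ * Y := by
  have h := inv_sub_inv (iff_of_true hGE hG)
  rw [sub_add_cancel_left, mul_neg, neg_mul, sub_eq_iff_eq_add'] at h
  conv_lhs => rw [h]
  simp only [Matrix.mul_add, Matrix.add_mul, Matrix.mul_neg, Matrix.neg_mul, Matrix.mul_assoc]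
  abel

end Matrix

section Expansion

variable {ι : Type*} [Fintype ι] [DecidableEq ι] {γ : Matrix ι ι ℝ}

theorem Matrix.flat_eq_mul_inv_mul (hγ : IsUnit γ) (P : Matrix ι ι ℝ) (Ω : ℝ) :
    γ + Ω ^ 2 • P + (Ω ^ 4 / 4) • (P * γ⁻¹ * P)
      = (γ + (Ω ^ 2 / 2) • P) * γ⁻¹ * (γ + (Ω ^ 2 / 2) • P) := by
  have hγ' := (Matrix.isUnit_iff_isUnit_det γ).1 hγ
  simp only [Matrix.add_mul, Matrix.mul_add, Matrix.smul_mul, Matrix.mul_smul, smul_add,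
    smul_smul, Matrix.mul_nonsing_inv _ hγ', Matrix.nonsing_inv_mul_cancel_right _ _ hγ',
    Matrix.one_mul]
  match_scalars <;> ring

theorem Matrix.flat_sandwich (hγ : IsUnit γ) (P : Matrix ι ι ℝ) {Ω : ℝ}
    (hN : IsUnit (γ + (Ω ^ 2 / 2) • P)) :
    (P + (Ω ^ 2 / 2) • (P * γ⁻¹ * P)) * (γ + Ω ^ 2 • P + (Ω ^ 4 / 4) • (P * γ⁻¹ * P))⁻¹
      * (P + (Ω ^ 2 / 2) • (P * γ⁻¹ * P)) = P * γ⁻¹ * P := by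
  have hγ' := (Matrix.isUnit_iff_isUnit_det γ).1 hγ
  have hXl : P + (Ω ^ 2 / 2) • (P * γ⁻¹ * P) = P * γ⁻¹ * (γ + (Ω ^ 2 / 2) • P) := by
    simp only [Matrix.mul_add, Matrix.mul_smul, Matrix.nonsing_inv_mul_cancel_right _ _ hγ']
  have hXr : P + (Ω ^ 2 / 2) • (P * γ⁻¹ * P) = (γ + (Ω ^ 2 / 2) • P) * (γ⁻¹ * P) := by
    simp only [Matrix.add_mul, Matrix.smul_mul, Matrix.mul_nonsing_inv_cancel_left _ _ hγ',
      Matrix.mul_assoc]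
  rw [Matrix.flat_eq_mul_inv_mul hγ]
  nth_rw 1 [hXl]
  rw [hXr, Matrix.mul_mul_inv_mul_mul_cancel hN hγ, Matrix.nonsing_inv_mul_cancel_right _ _ hγ',
    Matrix.mul_assoc]

theorem Matrix.expansion_sandwich (hγ : IsUnit γ) {P X g₀ : Matrix ι ι ℝ} {Ω : ℝ}
    (hX : X = P + (Ω ^ 2 / 2) • (P * γ⁻¹ * P))
    (hg₀ : g₀ = γ + Ω ^ 2 • P + (Ω ^ 4 / 4) • (P * γ⁻¹ * P))
    (hN : IsUnit (γ + (Ω ^ 2 / 2) • P)) {s : ℝ} {Q : Matrix ι ι ℝ} (hG : IsUnit (g₀ + s • Q)) :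
    X * (g₀ + s • Q)⁻¹ * X = P * γ⁻¹ * P - s • (X * (g₀ + s • Q)⁻¹ * Q * g₀⁻¹ * X) := by
  subst hX hg₀
  have hg₀ : IsUnit (γ + Ω ^ 2 • P + (Ω ^ 4 / 4) • (P * γ⁻¹ * P)) := by
    rw [Matrix.flat_eq_mul_inv_mul hγ]
    exact (hN.mul (Matrix.isUnit_nonsing_inv_iff.2 hγ)).mul hN
  rw [Matrix.mul_inv_add_mul hg₀ hG, Matrix.flat_sandwich hγ P hN]
  simp only [Matrix.mul_smul, Matrix.smul_mul]

end Expansion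

theorem rescaled_weyl_identity {R : Type*} [Ring R] [Algebra ℝ R] (m : ℕ) {Ω : ℝ} (hΩ : Ω ≠ 0)
    {P A X u W Gi : R} (q q1 q2 : R) (hX : X = P + (Ω ^ 2 / 2) • A)
    (hu : u = ((m : ℝ) + 2) • q + Ω • q1) (hW : X * Gi * X = A - Ω ^ (m + 2) • W) :
    (Ω ^ m)⁻¹ • ((1 / 2 : ℝ) •
          (((2 * Ω) • X + Ω ^ (m + 1) • u) * Gi * ((2 * Ω) • X + Ω ^ (m + 1) • u))
        + Ω⁻¹ • ((2 * Ω) • X + Ω ^ (m + 1) • u)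
        - ((2 : ℝ) • P + (3 * Ω ^ 2) • A + (((m : ℝ) + 2) * ((m : ℝ) + 1) * Ω ^ m) • q
          + (2 * ((m : ℝ) + 2) * Ω ^ (m + 1)) • q1 + Ω ^ (m + 2) • q2))
      = (-(((m : ℝ) + 2) * (((m : ℝ) + 2) - 2))) • q + ((1 - 2 * ((m : ℝ) + 2)) * Ω) • q1
        - Ω ^ 2 • q2 - (2 * Ω ^ 4) • W + Ω ^ 2 • (X * Gi * u + u * Gi * X)
        + (Ω ^ (m + 2) / 2) • (u * Gi * u) := by
  simp only [add_mul, mul_add, smul_mul_assoc, mul_smul_comm, smul_add, smul_smul, smul_sub, hW]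
  subst hX hu
  simp only [smul_add, smul_smul]
  match_scalars <;> field_simp <;> ring

section Calculus

variable {E : Type*} [NormedAddCommGroup E] [NormedSpace ℝ E]

theorem hasDerivAt_expansion (m : ℕ) (a b c : E) {q q1 : ℝ → E} {Ω : ℝ}
    (hq : HasDerivAt q (q1 Ω) Ω) :
    HasDerivAt (fun s => a + s ^ 2 • b + (s ^ 4 / 4) • c + s ^ (m + 2) • q s)
      ((2 * Ω) • (b + (Ω ^ 2 / 2) • c) + Ω ^ (m + 1) • (((m : ℝ) + 2) • q Ω + Ω • q1 Ω)) Ω := by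
  refine ((((hasDerivAt_const Ω a).add ((hasDerivAt_pow 2 Ω).smul_const b)).add
    (((hasDerivAt_pow 4 Ω).div_const 4).smul_const c)).add
      ((hasDerivAt_pow (m + 2) Ω).smul hq)).congr_deriv ?_
  rw [Nat.add_sub_assoc one_le_two]
  match_scalars <;> push_cast <;> ring

theorem hasDerivAt_expansion_deriv (m : ℕ) (b c : E) {q q1 : ℝ → E} {q2 : E} {Ω : ℝ}
    (hq : HasDerivAt q (q1 Ω) Ω) (hq1 : HasDerivAt q1 q2 Ω) :
    HasDerivAt
      (fun s => (2 * s) • (b + (s ^ 2 / 2) • c) + s ^ (m + 1) • (((m : ℝ) + 2) • q s + s • q1 s))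
      ((2 : ℝ) • b + (3 * Ω ^ 2) • c + (((m : ℝ) + 2) * ((m : ℝ) + 1) * Ω ^ m) • q Ω
        + (2 * ((m : ℝ) + 2) * Ω ^ (m + 1)) • q1 Ω + Ω ^ (m + 2) • q2) Ω := by
  refine ((((hasDerivAt_id Ω).const_mul 2).smul ((hasDerivAt_const Ω b).add
    (((hasDerivAt_pow 2 Ω).div_const 2).smul_const c))).add
    ((hasDerivAt_pow (m + 1) Ω).smul ((hq.const_smul ((m : ℝ) + 2)).add
      ((hasDerivAt_id Ω).smul hq1)))).congr_deriv ?_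
  simp only [id, Nat.add_sub_cancel, Pi.add_apply, Pi.smul_apply', Pi.smul_apply]
  match_scalars <;> push_cast <;> ring

theorem deriv_expansion (m : ℕ) {a b c : E} {q q1 q2 f : ℝ → E} {U : Set ℝ} (hU : IsOpen U)
    (hq : ∀ x ∈ U, HasDerivAt q (q1 x) x) (hq1 : ∀ x ∈ U, HasDerivAt q1 (q2 x) x)
    (hf : ∀ s, f s = a + s ^ 2 • b + (s ^ 4 / 4) • c + s ^ (m + 2) • q s) {Ω : ℝ} (hΩ : Ω ∈ U) :
    deriv f Ω = (2 * Ω) • (b + (Ω ^ 2 / 2) • c) + Ω ^ (m + 1) • (((m : ℝ) + 2) • q Ω + Ω • q1 Ω) ∧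
      deriv (deriv f) Ω = (2 : ℝ) • b + (3 * Ω ^ 2) • c
        + (((m : ℝ) + 2) * ((m : ℝ) + 1) * Ω ^ m) • q Ω
        + (2 * ((m : ℝ) + 2) * Ω ^ (m + 1)) • q1 Ω + Ω ^ (m + 2) • q2 Ω := by
  obtain rfl := funext hf
  have hderiv : ∀ x ∈ U, deriv (fun s => a + s ^ 2 • b + (s ^ 4 / 4) • c + s ^ (m + 2) • q s) x
      = (2 * x) • (b + (x ^ 2 / 2) • c) + x ^ (m + 1) • (((m : ℝ) + 2) • q x + x • q1 x) :=
    fun x hx => (hasDerivAt_expansion m a b c (hq x hx)).deriv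
  refine ⟨hderiv Ω hΩ, ?_⟩
  rw [(eventuallyEq_of_mem (hU.mem_nhds hΩ) hderiv).deriv_eq]
  exact (hasDerivAt_expansion_deriv m b c (hq Ω hΩ) (hq1 Ω hΩ)).deriv

end Calculus

section MatrixInverse

variable {α ι 𝕜 : Type*} [TopologicalSpace α] [Fintype ι] [DecidableEq ι] [NormedField 𝕜]
  {f : α → Matrix ι ι 𝕜} {s : Set α} {x : α}

theorem ContinuousWithinAt.eventually_isUnit_matrix (hf : ContinuousWithinAt f s x)
    (hx : IsUnit (f x)) : ∀ᶠ y in 𝓝[s] x, IsUnit (f y) := by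
  have hdet := continuous_id.matrix_det.continuousAt.comp_continuousWithinAt hf
  filter_upwards [hdet.eventually_ne ((Matrix.isUnit_iff_isUnit_det _).1 hx).ne_zero] with y hy
  exact (Matrix.isUnit_iff_isUnit_det _).2 (isUnit_iff_ne_zero.2 hy)

theorem ContinuousWithinAt.matrix_inv (hf : ContinuousWithinAt f s x) (hx : IsUnit (f x)) :
    ContinuousWithinAt (fun y => (f y)⁻¹) s x := by
  refine (continuousAt_matrix_inv _ ?_).comp_continuousWithinAt hf
  rw [Ring.inverse_eq_inv']
  exact continuousAt_inv₀ ((Matrix.isUnit_iff_isUnit_det _).1 hx).ne_zero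

end MatrixInverse

theorem ContDiffOn.hasDerivAt_derivWithin {𝕜 E : Type*} [NontriviallyNormedField 𝕜]
    [NormedAddCommGroup E] [NormedSpace 𝕜 E] {f : 𝕜 → E} {s : Set 𝕜} {x : 𝕜}
    (hf : ContDiffOn 𝕜 1 f s) (hs : s ∈ 𝓝 x) : HasDerivAt f (derivWithin f s x) x := by
  rw [derivWithin_of_mem_nhds hs]
  exact (hf.differentiableOn one_ne_zero).hasDerivAt hs

theorem tendsto_rescaled_weyl {ι : Type*} [Fintype ι] [DecidableEq ι] (m : ℕ)
    {γ : Matrix ι ι ℝ} (hγ : IsUnit γ) (P : Matrix ι ι ℝ) {U : Set ℝ} (hU : IsOpen U)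
    (hU0 : U ∈ 𝓝[>] 0) {q q1 q2 : ℝ → Matrix ι ι ℝ}
    (hq : ∀ x ∈ U, HasDerivAt q (q1 x) x) (hq1 : ∀ x ∈ U, HasDerivAt q1 (q2 x) x)
    (hq0 : ContinuousWithinAt q (Ioi 0) 0) (hq10 : ContinuousWithinAt q1 (Ioi 0) 0)
    (hq20 : ContinuousWithinAt q2 (Ioi 0) 0) {g : ℝ → Matrix ι ι ℝ}
    (hg : ∀ Ω : ℝ, g Ω = γ + Ω ^ 2 • P + (Ω ^ 4 / 4) • (P * γ⁻¹ * P) + Ω ^ (m + 2) • q Ω) :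
    Tendsto
      (fun Ω : ℝ => (Ω ^ ((2 : ℤ) - ((m + 2 : ℕ) : ℤ))) •
        ((1 / 2 : ℝ) • (deriv g Ω * (g Ω)⁻¹ * deriv g Ω) + Ω⁻¹ • deriv g Ω - deriv (deriv g) Ω))
      (𝓝[>] 0) (𝓝 ((-(((m + 2 : ℕ) : ℝ) * (((m + 2 : ℕ) : ℝ) - 2))) • q 0)) := by
  set A := P * γ⁻¹ * P
  set g₀ : ℝ → Matrix ι ι ℝ := fun Ω => γ + Ω ^ 2 • P + (Ω ^ 4 / 4) • A
  set X : ℝ → Matrix ι ι ℝ := fun Ω => P + (Ω ^ 2 / 2) • A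
  set u : ℝ → Matrix ι ι ℝ := fun Ω => ((m : ℝ) + 2) • q Ω + Ω • q1 Ω
  have hg0 : ContinuousWithinAt (fun Ω => g₀ Ω + Ω ^ (m + 2) • q Ω) (Ioi 0) 0 := by fun_prop
  have hg₀0 : ContinuousWithinAt g₀ (Ioi 0) 0 := by fun_prop
  have hN0 : ContinuousWithinAt (fun Ω : ℝ => γ + (Ω ^ 2 / 2) • P) (Ioi 0) 0 := by
    fun_prop (disch := norm_num)
  have hGi := hg0.matrix_inv (by simpa [g₀] using hγ)
  have hG₀i := hg₀0.matrix_inv (by simpa [g₀] using hγ)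
  have hX : ContinuousWithinAt X (Ioi 0) 0 := by fun_prop (disch := norm_num)
  have hu : ContinuousWithinAt u (Ioi 0) 0 :=
    (hq0.const_smul ((m : ℝ) + 2)).add (continuousWithinAt_id.smul hq10)
  have hF : ContinuousWithinAt (fun Ω => (-(((m : ℝ) + 2) * (((m : ℝ) + 2) - 2))) • q Ω
      + ((1 - 2 * ((m : ℝ) + 2)) * Ω) • q1 Ω - Ω ^ 2 • q2 Ω
      - (2 * Ω ^ 4) • (X Ω * (g₀ Ω + Ω ^ (m + 2) • q Ω)⁻¹ * q Ω * (g₀ Ω)⁻¹ * X Ω)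
      + Ω ^ 2 • (X Ω * (g₀ Ω + Ω ^ (m + 2) • q Ω)⁻¹ * u Ω
        + u Ω * (g₀ Ω + Ω ^ (m + 2) • q Ω)⁻¹ * X Ω)
      + (Ω ^ (m + 2) / 2) • (u Ω * (g₀ Ω + Ω ^ (m + 2) • q Ω)⁻¹ * u Ω)) (Ioi 0) 0 := by
    fun_prop (disch := norm_num)
  refine (hF.tendsto.mono_right (le_of_eq (congrArg 𝓝 (by simp)))).congr' ?_
  filter_upwards [self_mem_nhdsWithin, hU0, hg0.eventually_isUnit_matrix (by simpa [g₀] using hγ),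
    hN0.eventually_isUnit_matrix (by simpa using hγ)] with Ω hΩ hΩU hG hN
  -- the ascription restates `deriv` with the instances of the goal rather than those of `E`
  obtain ⟨hd1, hd2⟩ : deriv g Ω = _ ∧ deriv (deriv g) Ω = _ := deriv_expansion m hU hq hq1 hg hΩU
  rw [hd1, hd2, hg Ω, show (2 : ℤ) - ((m + 2 : ℕ) : ℤ) = -(m : ℤ) by push_cast; ring, zpow_neg,
    zpow_natCast]
  exact (rescaled_weyl_identity m (ne_of_gt hΩ) (q Ω) (q1 Ω) (q2 Ω) rfl rfl
    (Matrix.expansion_sandwich hγ rfl rfl hN hG)).symm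

theorem statement2_general
    (n : ℕ) (hn : 3 ≤ n)
    (γ P : Matrix (Fin n) (Fin n) ℝ)
    (hγ : IsUnit γ)
    (ε : ℝ) (hε : 0 < ε)
    (q : ℝ → Matrix (Fin n) (Fin n) ℝ)
    (hq : ContDiffOn ℝ 2 q (Set.Ico 0 ε))
    (g : ℝ → Matrix (Fin n) (Fin n) ℝ)
    (hg : ∀ Ω : ℝ, g Ω = γ + Ω^2 • P + (Ω^4/4) • (P * γ⁻¹ * P) + Ω^n • q Ω) :
    Filter.Tendsto
      (fun Ω : ℝ => (Ω ^ ((2:ℤ) - (n:ℤ))) •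
        ((1/2 : ℝ) • (deriv g Ω * (g Ω)⁻¹ * deriv g Ω)
          + Ω⁻¹ • deriv g Ω - deriv (deriv g) Ω))
      (nhdsWithin 0 (Set.Ioi 0))
      (nhds ((-((n : ℝ) * ((n : ℝ) - 2))) • q 0)) := by
  obtain ⟨m, rfl⟩ : ∃ m, n = m + 2 := ⟨n - 2, by omega⟩
  have hI : Ico 0 ε ∈ 𝓝[>] (0 : ℝ) := Ico_mem_nhdsGT hε
  have hIoo : ∀ x ∈ Ioo 0 ε, Ico 0 ε ∈ 𝓝 x := fun x hx =>
    mem_of_superset (isOpen_Ioo.mem_nhds hx) Ioo_subset_Ico_self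
  have hq1 := hq.derivWithin (uniqueDiffOn_Ico 0 ε) (m := 1) (by norm_num)
  have hq2 := hq1.derivWithin (uniqueDiffOn_Ico 0 ε) (m := 0) (by norm_num)
  have hcont : ∀ {f : ℝ → Matrix (Fin (m + 2)) (Fin (m + 2)) ℝ}, ContinuousOn f (Ico 0 ε) →
      ContinuousWithinAt f (Ioi 0) 0 := fun hf =>
    (hf 0 ⟨le_rfl, hε⟩).mono_of_mem_nhdsWithin hI
  exact tendsto_rescaled_weyl m hγ P isOpen_Ioo (Ioo_mem_nhdsGT hε)
    (fun x hx => (hq.of_le one_le_two).hasDerivAt_derivWithin (hIoo x hx))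
    (fun x hx => hq1.hasDerivAt_derivWithin (hIoo x hx))
    (hcont hq.continuousOn) (hcont hq1.continuousOn) (hcont hq2.continuousOn) hg

/-- analytic core of Theorem 2.9 of the paper.  For
`g(Ω) = γ + Ω²P + (Ω⁴/4)Pγ⁻¹P + Ωⁿ q(Ω)` (the Fefferman–Graham expansion with conformally
flat boundary), the rescaled electric Weyl quantity
`Ω^{2-n}((1/2)ġ g⁻¹ ġ + Ω⁻¹ġ − g̈)` tends to `−n(n−2) q(0)` as `Ω → 0⁺`. -/
theorem statement2
    (n : ℕ) (hn : 3 ≤ n)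
    (γ P : Matrix (Fin n) (Fin n) ℝ)
    (hγs : γ.IsSymm) (hPs : P.IsSymm) (hγ : IsUnit γ)
    (ε : ℝ) (hε : 0 < ε)
    (q : ℝ → Matrix (Fin n) (Fin n) ℝ)
    (hq : ContDiffOn ℝ 2 q (Set.Ico 0 ε))
    (hqs : ∀ Ω ∈ Set.Ico (0:ℝ) ε, (q Ω).IsSymm)
    (g : ℝ → Matrix (Fin n) (Fin n) ℝ)
    (hg : ∀ Ω : ℝ, g Ω = γ + Ω^2 • P + (Ω^4/4) • (P * γ⁻¹ * P) + Ω^n • q Ω)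
    (hinv : ∀ Ω ∈ Set.Ico (0:ℝ) ε, IsUnit (g Ω)) :
    Filter.Tendsto
      (fun Ω : ℝ => (Ω ^ ((2:ℤ) - (n:ℤ))) •
        ((1/2 : ℝ) • (deriv g Ω * (g Ω)⁻¹ * deriv g Ω)
          + Ω⁻¹ • deriv g Ω - deriv (deriv g) Ω))
      (nhdsWithin 0 (Set.Ioi 0))
      (nhds ((-((n : ℝ) * ((n : ℝ) - 2))) • q 0)) :=
  statement2_general n hn γ P hγ ε hε q hq g hg
end

section
/- Let n ≥ 1, let γ and P be symmetric n×n real matrices with γ invertible, and define g(Ω) := γ + Ω² P + (Ω⁴/4) P γ⁻¹ P for Ω ∈ ℝ. Then for every Ω ≠ 0 such that the matrix γ + (Ω²/2) P is invertible, g(Ω) is invertible and g̈(Ω) = (1/2) ġ(Ω) g(Ω)⁻¹ ġ(Ω) + Ω⁻¹ ġ(Ω), where dots denote d/dΩ. Equivalently, ġ(Ω) g(Ω)⁻¹ ġ(Ω) = 4Ω² P γ⁻¹ P there. -/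
/-!
With `A = γ + (Ω²/2) P` the family factors as `g = A γ⁻¹ A`, and its derivative
`ġ = 2Ω P + Ω³ Pγ⁻¹P` factors both as `2Ω P γ⁻¹ A` and as `2Ω A γ⁻¹ P`. Hence in
`ġ g⁻¹ ġ = 4Ω² P γ⁻¹ A · A⁻¹ γ A⁻¹ · A γ⁻¹ P` all the `A`'s cancel, leaving `4Ω² Pγ⁻¹P`;
the ODE is then a scalar identity between the coefficients of `P` and `Pγ⁻¹P` in
`g̈ = 2P + 3Ω² Pγ⁻¹P`.
-/

namespace Matrix

variable {ι R : Type*} [Fintype ι] [DecidableEq ι] [CommRing R] {γ : Matrix ι ι R}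

theorem mul_nonsing_inv_mul_add_smul (hγ : IsUnit γ) (X P : Matrix ι ι R) (s : R) :
    X * γ⁻¹ * (γ + s • P) = X + s • (X * γ⁻¹ * P) := by
  rw [Matrix.mul_add, Matrix.mul_smul,
    nonsing_inv_mul_cancel_right _ _ ((isUnit_iff_isUnit_det γ).mp hγ)]

theorem add_smul_mul_nonsing_inv_mul (hγ : IsUnit γ) (P Y : Matrix ι ι R) (s : R) :
    (γ + s • P) * γ⁻¹ * Y = Y + s • (P * γ⁻¹ * Y) := by
  rw [Matrix.add_mul, Matrix.add_mul, Matrix.smul_mul, Matrix.smul_mul,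
    mul_nonsing_inv γ ((isUnit_iff_isUnit_det γ).mp hγ), Matrix.one_mul]

theorem add_smul_mul_nonsing_inv_mul_add_smul (hγ : IsUnit γ) (P : Matrix ι ι R) (s : R) :
    (γ + s • P) * γ⁻¹ * (γ + s • P) = γ + (2 * s) • P + s ^ 2 • (P * γ⁻¹ * P) := by
  rw [add_smul_mul_nonsing_inv_mul hγ, mul_nonsing_inv_mul_add_smul hγ, smul_add, smul_smul]
  module

theorem mul_nonsing_inv_mul_sandwich (hγ : IsUnit γ) {A : Matrix ι ι R} (hA : IsUnit A)
    (X Y : Matrix ι ι R) :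
    X * γ⁻¹ * A * (A * γ⁻¹ * A)⁻¹ * (A * γ⁻¹ * Y) = X * γ⁻¹ * Y := by
  have hγ' := (isUnit_iff_isUnit_det γ).mp hγ
  have hA' := (isUnit_iff_isUnit_det A).mp hA
  rw [mul_inv_rev, mul_inv_rev, nonsing_inv_nonsing_inv γ hγ']
  simp only [Matrix.mul_assoc, nonsing_inv_mul_cancel_left _ _ hA',
    mul_nonsing_inv_cancel_left _ _ hγ', mul_nonsing_inv_cancel_left _ _ hA']

end Matrix

section Quartic

variable {𝕜 E : Type*} [RCLike 𝕜] [NormedAddCommGroup E] [NormedSpace 𝕜 E]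

theorem hasDerivAt_quartic (a b c : E) (t : 𝕜) :
    HasDerivAt (fun t : 𝕜 => a + t ^ 2 • b + (t ^ 4 / 4) • c) ((2 * t) • b + t ^ 3 • c) t := by
  have h2 : HasDerivAt (fun t : 𝕜 => t ^ 2) (2 * t) t := by simpa using hasDerivAt_pow 2 t
  have h4 : HasDerivAt (fun t : 𝕜 => t ^ 4 / 4) (t ^ 3) t :=
    ((hasDerivAt_pow 4 t).div_const 4).congr_deriv (by ring)
  exact (((hasDerivAt_const t a).fun_add (h2.smul_const b)).fun_add (h4.smul_const c)).congr_deriv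
    (by rw [zero_add])

theorem hasDerivAt_cubic (b c : E) (t : 𝕜) :
    HasDerivAt (fun t : 𝕜 => (2 * t) • b + t ^ 3 • c) ((2 : 𝕜) • b + (3 * t ^ 2) • c) t := by
  have h1 : HasDerivAt (fun t : 𝕜 => 2 * t) 2 t := by simpa using (hasDerivAt_id t).const_mul 2
  have h3 : HasDerivAt (fun t : 𝕜 => t ^ 3) (3 * t ^ 2) t := by simpa using hasDerivAt_pow 3 t
  exact (h1.smul_const b).add (h3.smul_const c)

end Quartic

attribute [local instance] Matrix.normedAddCommGroup Matrix.normedSpace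

theorem statement5_general
    (n : ℕ)
    (γ P : Matrix (Fin n) (Fin n) ℝ)
    (hγ : IsUnit γ)
    (g : ℝ → Matrix (Fin n) (Fin n) ℝ)
    (hg : ∀ Ω : ℝ, g Ω = γ + Ω^2 • P + (Ω^4/4) • (P * γ⁻¹ * P)) :
    ∀ Ω : ℝ, Ω ≠ 0 → IsUnit (γ + (Ω^2/2) • P) →
      IsUnit (g Ω) ∧
      deriv (deriv g) Ω
        = (1/2 : ℝ) • (deriv g Ω * (g Ω)⁻¹ * deriv g Ω) + Ω⁻¹ • deriv g Ω ∧
      deriv g Ω * (g Ω)⁻¹ * deriv g Ω = (4*Ω^2) • (P * γ⁻¹ * P) := by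
  intro Ω hΩ hA
  set A := γ + (Ω^2/2) • P
  have hdg (t : ℝ) : deriv g t = (2 * t) • P + t ^ 3 • (P * γ⁻¹ * P) := by
    rw [funext hg]; exact (hasDerivAt_quartic _ _ _ t).deriv
  have hddg : deriv (deriv g) Ω = (2 : ℝ) • P + (3 * Ω ^ 2) • (P * γ⁻¹ * P) := by
    rw [funext hdg]; exact (hasDerivAt_cubic _ _ Ω).deriv
  have hgA : g Ω = A * γ⁻¹ * A := by
    rw [Matrix.add_smul_mul_nonsing_inv_mul_add_smul hγ, hg]
    module
  have hdgA : deriv g Ω = (2 * Ω) • (P * γ⁻¹ * A) := by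
    rw [Matrix.mul_nonsing_inv_mul_add_smul hγ, hdg]
    module
  have hdgA' : deriv g Ω = (2 * Ω) • (A * γ⁻¹ * P) := by
    rw [Matrix.add_smul_mul_nonsing_inv_mul hγ, hdg]
    module
  have hprod : deriv g Ω * (g Ω)⁻¹ * deriv g Ω = (4 * Ω ^ 2) • (P * γ⁻¹ * P) := by
    nth_rw 1 [hdgA]
    rw [hdgA', hgA]
    simp only [Matrix.smul_mul, Matrix.mul_smul, smul_smul]
    rw [Matrix.mul_nonsing_inv_mul_sandwich hγ hA]
    congr 1; ring
  refine ⟨hgA ▸ (hA.mul (Matrix.isUnit_nonsing_inv_iff.mpr hγ)).mul hA, ?_, hprod⟩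
  rw [hddg, hprod, hdg]
  match_scalars <;> field_simp; ring

/-- converse direction in Lemma 3.3 of the paper.  The explicit quartic
family `g(Ω) = γ + Ω²P + (Ω⁴/4)Pγ⁻¹P` (the de Sitter Fefferman–Graham normal form)
satisfies the purely-magnetic ODE `g̈ = (1/2) ġ g⁻¹ ġ + Ω⁻¹ ġ`, and
`ġ g⁻¹ ġ = 4Ω² Pγ⁻¹P`, wherever `Ω ≠ 0` and `γ + (Ω²/2)P` is invertible. -/
theorem statement5
    (n : ℕ) (hn : 1 ≤ n)
    (γ P : Matrix (Fin n) (Fin n) ℝ)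
    (hγs : γ.IsSymm) (hPs : P.IsSymm) (hγ : IsUnit γ)
    (g : ℝ → Matrix (Fin n) (Fin n) ℝ)
    (hg : ∀ Ω : ℝ, g Ω = γ + Ω^2 • P + (Ω^4/4) • (P * γ⁻¹ * P)) :
    ∀ Ω : ℝ, Ω ≠ 0 → IsUnit (γ + (Ω^2/2) • P) →
      IsUnit (g Ω) ∧
      deriv (deriv g) Ω
        = (1/2 : ℝ) • (deriv g Ω * (g Ω)⁻¹ * deriv g Ω) + Ω⁻¹ • deriv g Ω ∧
      deriv g Ω * (g Ω)⁻¹ * deriv g Ω = (4*Ω^2) • (P * γ⁻¹ * P) :=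
  statement5_general n γ P hγ g hg
end

section
/- Let n ≥ 3 be an integer, ω > 0 a real number, J an n×n real matrix with Jᵀ J = ω² Iₙ, and w ∈ ℝⁿ a nonzero vector. For a nonzero vector v ∈ ℝⁿ let D(v) := |v|^{−(n+2)} ( v vᵀ − (|v|²/n) Iₙ ). Then Jᵀ D(Jw) J = ω^{2−n} D(w). -/
open scoped BigOperators Matrix

/-- The symmetric matrix `D(v) = |v|^{−(n+2)} ( v vᵀ − (|v|²/n) Iₙ )`. -/
noncomputable def Dmat (n : ℕ) (v : Fin n → ℝ) : Matrix (Fin n) (Fin n) ℝ :=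
  ((Real.sqrt (∑ i, (v i)^2)) ^ (n+2))⁻¹ •
    (Matrix.vecMulVec v v - ((∑ i, (v i)^2) / (n : ℝ)) • (1 : Matrix (Fin n) (Fin n) ℝ))

lemma aux1 (n : ℕ) (J : Matrix (Fin n) (Fin n) ℝ) (w : Fin n → ℝ) :
    Matrix.vecMulVec (J.mulVec w) (J.mulVec w) = J * Matrix.vecMulVec w w * Jᵀ := by
  ext i j
  simp only [Matrix.vecMulVec_apply, Matrix.mul_apply, Matrix.mulVec, dotProduct,
    Matrix.transpose_apply]
  rw [Finset.sum_mul_sum, Finset.sum_comm]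
  refine Finset.sum_congr rfl fun l _ => ?_
  rw [Finset.sum_mul]
  exact Finset.sum_congr rfl fun k _ => by ring

lemma aux2 (n : ℕ) (ω : ℝ) (J : Matrix (Fin n) (Fin n) ℝ)
    (hJ : Jᵀ * J = ω^2 • (1 : Matrix (Fin n) (Fin n) ℝ)) (w : Fin n → ℝ) :
    ∑ i, (J.mulVec w i)^2 = ω^2 * ∑ i, (w i)^2 := by
  have h1 : ∑ i, (J.mulVec w i)^2 = (J.mulVec w) ⬝ᵥ (J.mulVec w) := by
    simp [dotProduct, sq]
  have h2 : (J.mulVec w) ⬝ᵥ (J.mulVec w) = (Jᵀ * J).mulVec w ⬝ᵥ w := by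
    rw [Matrix.dotProduct_mulVec, ← Matrix.mulVec_transpose, ← Matrix.mulVec_mulVec]
  rw [h1, h2, hJ]
  simp [Matrix.smul_mulVec, dotProduct, Finset.mul_sum, sq]
  ring_nf

lemma aux3 (n : ℕ) (ω : ℝ) (c : ℝ) (J M : Matrix (Fin n) (Fin n) ℝ)
    (hJ : Jᵀ * J = ω^2 • (1 : Matrix (Fin n) (Fin n) ℝ)) :
    Jᵀ * (J * M * Jᵀ - c • (1 : Matrix (Fin n) (Fin n) ℝ)) * J
      = (ω^2 * ω^2) • M - (c * ω^2) • (1 : Matrix (Fin n) (Fin n) ℝ) := by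
  have h1 : Jᵀ * (J * M * Jᵀ) * J = (Jᵀ * J) * (M * (Jᵀ * J)) := by
    simp only [Matrix.mul_assoc]
  rw [Matrix.mul_sub, Matrix.sub_mul, h1, Matrix.mul_smul, Matrix.mul_one,
    Matrix.smul_mul, hJ]
  simp only [Matrix.smul_mul, Matrix.mul_smul, Matrix.one_mul, Matrix.mul_one, smul_smul]

/-- computational core of Lemma 4.2 of the paper.  For a conformal
matrix `J` with `JᵀJ = ω² Iₙ` and a nonzero vector `w`, `Jᵀ D(Jw) J = ω^{2−n} D(w)`. -/
theorem statement12
    (n : ℕ) (hn : 3 ≤ n) (ω : ℝ) (hω : 0 < ω)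
    (J : Matrix (Fin n) (Fin n) ℝ)
    (hJ : Jᵀ * J = ω^2 • (1 : Matrix (Fin n) (Fin n) ℝ))
    (w : Fin n → ℝ) (hw : w ≠ 0) :
    Jᵀ * Dmat n (J.mulVec w) * J = (ω ^ ((2:ℤ) - (n:ℤ))) • Dmat n w := by
  set T := ∑ i, (w i)^2 with hT
  have hTpos : 0 < T := by
    obtain ⟨i, hi⟩ := Function.ne_iff.mp hw
    exact Finset.sum_pos' (fun j _ => sq_nonneg _)
      ⟨i, Finset.mem_univ i, pow_two_pos_of_ne_zero hi⟩
  set s := Real.sqrt T with hs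
  have hspos : 0 < s := Real.sqrt_pos.mpr hTpos
  have hsum : ∑ i, (J.mulVec w i)^2 = ω^2 * T := aux2 n ω J hJ w
  have hsqrt : Real.sqrt (∑ i, (J.mulVec w i)^2) = ω * s := by
    rw [hsum, Real.sqrt_mul (sq_nonneg ω), Real.sqrt_sq hω.le]
  set M := Matrix.vecMulVec w w with hM
  have key : Jᵀ * Dmat n (J.mulVec w) * J
      = (((ω*s)^(n+2))⁻¹ * ω^4) • (M - (T / n) • (1 : Matrix (Fin n) (Fin n) ℝ)) := by
    rw [Dmat, hsqrt, hsum, aux1, Matrix.mul_smul, Matrix.smul_mul,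
      aux3 n ω _ J M hJ]
    module
  rw [key, Dmat, smul_smul, ← hT, ← hs, ← hM]
  congr 1
  have hz : ω ^ ((2:ℤ) - (n:ℤ)) = ω^4 / ω^(n+2) := by
    rw [eq_div_iff (by positivity), ← zpow_natCast ω (n+2), ← zpow_natCast ω 4,
      ← zpow_add₀ hω.ne']
    rw [show (2:ℤ) - (n:ℤ) + (((n:ℕ)+2 : ℕ):ℤ) = ((4:ℕ):ℤ) by push_cast; ring, zpow_natCast]
  rw [hz, mul_pow]
  field_simp
end
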